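/- arXiv:1211.2389 — 10 statements merged into one kernel-verified Lean document; each statement's English description precedes it below -/
import Mathlib

section
/- Let (X,d) be a finite ultrametric space with |X| ≥ 2. Then the relation on X defined by x ≈ y if and only if d(x,y) < diam X is an equivalence relation on X, and it has at least two equivalence classes. (Equivalently, the diametral graph G_d of (X,d) is a complete k-partite graph with k ≥ 2, the parts being the equivalence classes.) -/
/-- For a finite ultrametric space `(X,d)` with `|X| ≥ 2`, the relation
`x ≈ y ↔ d(x,y) < diam X` is an equivalence relation, and it has at least two
equivalence classes (i.e. there exist two non-equivalent points), so the diametral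
graph is complete `k`-partite with `k ≥ 2`. -/
theorem stmt0 {X : Type*} [MetricSpace X] [Fintype X]
    (hultra : ∀ x y z : X, dist x y ≤ max (dist x z) (dist z y))
    (hcard : 2 ≤ Fintype.card X) :
    Equivalence (fun x y : X => dist x y < Metric.diam (Set.univ : Set X)) ∧
      ∃ x y : X, ¬ dist x y < Metric.diam (Set.univ : Set X) := by
  obtain ⟨a, b, hab⟩ := Fintype.exists_pair_of_one_lt_card hcard
  have hbdd : Bornology.IsBounded (Set.univ : Set X) :=
    (Set.finite_univ).isBounded
  have hdiam_pos : 0 < Metric.diam (Set.univ : Set X) := by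
    have := Metric.dist_le_diam_of_mem hbdd (Set.mem_univ a) (Set.mem_univ b)
    have : 0 < dist a b := dist_pos.2 hab
    linarith [Metric.dist_le_diam_of_mem hbdd (Set.mem_univ a) (Set.mem_univ b)]
  constructor
  · constructor
    · intro x; simpa using hdiam_pos
    · intro x y h; simpa [dist_comm] using h
    · intro x y z hxy hyz
      exact lt_of_le_of_lt (hultra x z y) (max_lt hxy hyz)
  · have : Nonempty X := ⟨a⟩
    obtain ⟨p, -, hp⟩ := Finset.exists_max_image (Finset.univ ×ˢ Finset.univ : Finset (X × X))
      (fun q => dist q.1 q.2) ⟨(a, b), by simp⟩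
    refine ⟨p.1, p.2, not_lt.2 ?_⟩
    refine Metric.diam_le_of_forall_dist_le (dist_nonneg) ?_
    intro x _ y _
    exact hp (x, y) (by simp)
end

section
/- (Gomory–Hu inequality.) Let (X,d) be a finite nonempty ultrametric space. Then |Sp(X)| ≤ |X| − 1, where Sp(X) = {d(x,y) : x,y ∈ X, x ≠ y} is the spectrum of X. -/
/-- The spectrum of a metric space: the set of nonzero distances realized
between distinct points. -/
def spec {X : Type*} [MetricSpace X] (A : Set X) : Set ℝ :=
  {r : ℝ | ∃ x ∈ A, ∃ y ∈ A, x ≠ y ∧ dist x y = r}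

lemma spec_finite {X : Type*} [MetricSpace X] {A : Set X} (hA : A.Finite) :
    (spec A).Finite := by
  apply Set.Finite.subset ((hA.prod hA).image (fun p : X × X => dist p.1 p.2))
  rintro r ⟨x, hx, y, hy, _, rfl⟩
  exact ⟨(x, y), ⟨hx, hy⟩, rfl⟩

lemma spec_mono {X : Type*} [MetricSpace X] {A B : Set X} (h : A ⊆ B) :
    spec A ⊆ spec B := by
  rintro r ⟨x, hx, y, hy, hxy, rfl⟩
  exact ⟨x, h hx, y, h hy, hxy, rfl⟩

lemma aux {X : Type*} [MetricSpace X]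
    (hultra : ∀ x y z : X, dist x y ≤ max (dist x z) (dist z y)) :
    ∀ n : ℕ, ∀ A : Set X, A.Finite → A.ncard = n → (spec A).ncard ≤ A.ncard - 1 := by
  intro n
  induction n using Nat.strong_induction_on with
  | _ n ih =>
    intro A hA hcard
    -- trivial case: no two distinct points
    by_cases hsub : ∀ x ∈ A, ∀ y ∈ A, x = y
    · have : spec A = ∅ := by
        ext r
        simp only [spec, Set.mem_setOf_eq, Set.mem_empty_iff_false, iff_false]
        rintro ⟨x, hx, y, hy, hxy, _⟩
        exact hxy (hsub x hx y hy)
      simp [this]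
    · push_neg at hsub
      obtain ⟨u₀, hu₀, v₀, hv₀, huv₀⟩ := hsub
      have hspec_ne : (spec A).Nonempty := ⟨dist u₀ v₀, u₀, hu₀, v₀, hv₀, huv₀, rfl⟩
      have hspec_fin : (spec A).Finite := spec_finite hA
      -- maximal element m of the spectrum
      obtain ⟨m, hm_mem, hm_max⟩ := Set.exists_max_image (spec A) id hspec_fin hspec_ne
      obtain ⟨u, hu, v, hv, huv, hduv⟩ := hm_mem
      have hmpos : 0 < m := by rw [← hduv]; exact dist_pos.mpr huv
      -- every distance from u within A is ≤ m
      have hle : ∀ x ∈ A, dist u x ≤ m := by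
        intro x hx
        by_cases hxu : x = u
        · simp [hxu]; linarith
        · exact hm_max _ ⟨u, hu, x, hx, Ne.symm hxu, rfl⟩
      set A₁ : Set X := {x ∈ A | dist u x < m} with hA₁def
      set A₂ : Set X := {x ∈ A | dist u x = m} with hA₂def
      have hA₁sub : A₁ ⊆ A := fun x hx => hx.1
      have hA₂sub : A₂ ⊆ A := fun x hx => hx.1
      have hA₁fin : A₁.Finite := hA.subset hA₁sub
      have hA₂fin : A₂.Finite := hA.subset hA₂sub
      have huA₁ : u ∈ A₁ := ⟨hu, by simp [hmpos]⟩
      have hvA₂ : v ∈ A₂ := ⟨hv, hduv⟩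
      have hcover : A = A₁ ∪ A₂ := by
        ext x
        constructor
        · intro hx
          rcases lt_or_eq_of_le (hle x hx) with h | h
          · exact Or.inl ⟨hx, h⟩
          · exact Or.inr ⟨hx, h⟩
        · rintro (hx | hx) <;> exact hx.1
      have hdisj : Disjoint A₁ A₂ := by
        rw [Set.disjoint_left]
        rintro x ⟨_, h1⟩ ⟨_, h2⟩
        exact absurd h2 (ne_of_lt h1)
      have hcardsum : A₁.ncard + A₂.ncard = A.ncard := by
        rw [hcover, Set.ncard_union_eq hdisj hA₁fin hA₂fin]
      have h1pos : 1 ≤ A₁.ncard := (Set.ncard_pos hA₁fin).mpr ⟨u, huA₁⟩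
      have h2pos : 1 ≤ A₂.ncard := (Set.ncard_pos hA₂fin).mpr ⟨v, hvA₂⟩
      have hA₁lt : A₁.ncard < n := by
        rw [← hcard]; omega
      have hA₂lt : A₂.ncard < n := by
        rw [← hcard]; omega
      have ih₁ := ih A₁.ncard hA₁lt A₁ hA₁fin rfl
      have ih₂ := ih A₂.ncard hA₂lt A₂ hA₂fin rfl
      -- cross distances equal m
      have hcross : ∀ x ∈ A₁, ∀ y ∈ A₂, dist x y = m := by
        rintro x ⟨hxA, hx⟩ y ⟨hyA, hy⟩
        have h1 : dist x y ≤ m := by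
          have := hultra x y u
          have h2 : dist x u ≤ m := by rw [dist_comm]; linarith [hx]
          have h3 : dist u y ≤ m := le_of_eq hy
          exact le_trans this (max_le h2 h3)
        have h2 : m ≤ dist x y := by
          have := hultra u y x
          rw [hy] at this
          rcases le_max_iff.mp this with h | h
          · linarith [hx]
          · exact h
        linarith
      have hsubset : spec A ⊆ spec A₁ ∪ spec A₂ ∪ {m} := by
        rintro r ⟨x, hx, y, hy, hxy, rfl⟩
        rw [hcover] at hx hy
        rcases hx with hx | hx <;> rcases hy with hy | hy
        · exact Or.inl (Or.inl ⟨x, hx, y, hy, hxy, rfl⟩)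
        · exact Or.inr (hcross x hx y hy)
        · refine Or.inr ?_
          rw [dist_comm]; exact hcross y hy x hx
        · exact Or.inl (Or.inr ⟨x, hx, y, hy, hxy, rfl⟩)
      calc (spec A).ncard ≤ (spec A₁ ∪ spec A₂ ∪ {m}).ncard :=
            Set.ncard_le_ncard hsubset
              (((spec_finite hA₁fin).union (spec_finite hA₂fin)).union (Set.finite_singleton m))
        _ ≤ (spec A₁ ∪ spec A₂).ncard + ({m} : Set ℝ).ncard :=
            Set.ncard_union_le _ _
        _ ≤ (spec A₁).ncard + (spec A₂).ncard + 1 := by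
            have := Set.ncard_union_le (spec A₁) (spec A₂)
            simp only [Set.ncard_singleton]
            omega
        _ ≤ (A₁.ncard - 1) + (A₂.ncard - 1) + 1 := by omega
        _ ≤ A.ncard - 1 := by omega

/-- Gomory–Hu inequality: for a finite nonempty ultrametric space `(X,d)`,
`|Sp(X)| ≤ Fintype.card X - 1`. -/
theorem stmt1 {X : Type*} [MetricSpace X] [Fintype X] [Nonempty X]
    (hultra : ∀ x y z : X, dist x y ≤ max (dist x z) (dist z y)) :
    (spec (Set.univ : Set X)).ncard ≤ Fintype.card X - 1 := by
  have := aux hultra (Set.univ : Set X).ncard Set.univ (Set.finite_univ) rfl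
  rwa [Set.ncard_univ, Nat.card_eq_fintype_card] at this
end

section
/- Let (X,d) be a finite ultrametric space with |X| ≥ 2, and suppose the equivalence relation on X defined by x ≈ y iff d(x,y) < diam X has exactly k equivalence classes. Then |Sp(X)| ≤ |X| − k + 1. -/
open Finset in
/-- Finset version of the spectrum. -/
noncomputable def specF {X : Type*} [MetricSpace X] [DecidableEq X] (A : Finset X) : Finset ℝ :=
  ((A ×ˢ A).filter fun p => p.1 ≠ p.2).image fun p => dist p.1 p.2

lemma mem_specF {X : Type*} [MetricSpace X] [DecidableEq X] {A : Finset X} {r : ℝ} :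
    r ∈ specF A ↔ ∃ x ∈ A, ∃ y ∈ A, x ≠ y ∧ dist x y = r := by
  unfold specF
  rw [Finset.mem_image]
  constructor
  · rintro ⟨p, hp, h⟩
    rw [Finset.mem_filter, Finset.mem_product] at hp
    exact ⟨p.1, hp.1.1, p.2, hp.1.2, hp.2, h⟩
  · rintro ⟨x, hx, y, hy, hne, h⟩
    refine ⟨(x, y), ?_, h⟩
    rw [Finset.mem_filter, Finset.mem_product]
    exact ⟨⟨hx, hy⟩, hne⟩

lemma spec_coe {X : Type*} [MetricSpace X] [DecidableEq X] (A : Finset X) :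
    spec (A : Set X) = ↑(specF A) := by
  ext r
  simp only [spec, Set.mem_setOf_eq, Finset.mem_coe, mem_specF]

lemma key {X : Type*} [MetricSpace X] [DecidableEq X]
    (hultra : ∀ x y z : X, dist x y ≤ max (dist x z) (dist z y))
    (A : Finset X) : (specF A).card ≤ A.card - 1 := by
  induction A using Finset.strongInduction with
  | _ A ih =>
  rcases le_or_gt A.card 1 with h1 | h1
  · have hA1 : ∀ x ∈ A, ∀ y ∈ A, x = y := Finset.card_le_one.mp h1
    have : specF A = ∅ := by
      ext r
      simp only [mem_specF, Finset.notMem_empty, iff_false]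
      rintro ⟨x, hx, y, hy, hne, _⟩
      exact hne (hA1 x hx y hy)
    simp [this]
  · obtain ⟨u, hu, v, hv, huv⟩ := Finset.one_lt_card.mp h1
    have hA : A.Nonempty := ⟨u, hu⟩
    have hAA : (A ×ˢ A).Nonempty := hA.product hA
    set D := (A ×ˢ A).sup' hAA (fun p => dist p.1 p.2) with hDdef
    have hle : ∀ x ∈ A, ∀ y ∈ A, dist x y ≤ D := by
      intro x hx y hy
      have hm : (x, y) ∈ A ×ˢ A := by
        rw [Finset.mem_product]; exact ⟨hx, hy⟩
      exact Finset.le_sup' (f := fun p : X × X => dist p.1 p.2) hm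
    obtain ⟨p0, hp0, hp0D⟩ := Finset.exists_mem_eq_sup' hAA (fun p : X × X => dist p.1 p.2)
    obtain ⟨a, b⟩ := p0
    have haA : a ∈ A := (Finset.mem_product.mp hp0).1
    have hbA : b ∈ A := (Finset.mem_product.mp hp0).2
    have habD : dist a b = D := hp0D.symm
    have hDpos : 0 < D := lt_of_lt_of_le (dist_pos.mpr huv) (hle u hu v hv)
    set B := A.filter (fun x => dist x a < D) with hBdef
    set C := A.filter (fun x => ¬ dist x a < D) with hCdef
    have haB : a ∈ B := Finset.mem_filter.mpr ⟨haA, by simpa using hDpos⟩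
    have hbC : b ∈ C := by
      refine Finset.mem_filter.mpr ⟨hbA, ?_⟩
      rw [dist_comm, habD]
      exact lt_irrefl D
    have hBsub : B ⊂ A := by
      refine Finset.ssubset_iff_of_subset (Finset.filter_subset _ _) |>.mpr ?_
      exact ⟨b, hbA, by simp [hBdef, dist_comm, habD]⟩
    have hCsub : C ⊂ A := by
      refine Finset.ssubset_iff_of_subset (Finset.filter_subset _ _) |>.mpr ?_
      exact ⟨a, haA, by simp [hCdef, hDpos]⟩
    have cross : ∀ x ∈ B, ∀ y ∈ C, dist x y = D := by
      intro x hx y hy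
      obtain ⟨hxA, hxa⟩ := Finset.mem_filter.mp hx
      obtain ⟨hyA, hya⟩ := Finset.mem_filter.mp hy
      have hyaD : D ≤ dist y a := not_lt.mp hya
      have h1 : dist y a ≤ max (dist y x) (dist x a) := hultra y a x
      have h2 : D ≤ dist y x := by
        rcases max_cases (dist y x) (dist x a) with ⟨heq, _⟩ | ⟨heq, hlt⟩
        · exact le_trans hyaD (heq ▸ h1)
        · exact absurd (lt_of_le_of_lt (le_trans hyaD (heq ▸ h1)) hxa) (lt_irrefl D)
      exact le_antisymm (hle x hxA y hyA) (by rwa [dist_comm] at h2)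
    have hsubset : specF A ⊆ insert D (specF B ∪ specF C) := by
      intro r hr
      obtain ⟨x, hx, y, hy, hne, hdist⟩ := mem_specF.mp hr
      by_cases hxB : dist x a < D <;> by_cases hyB : dist y a < D
      · refine Finset.mem_insert.mpr (Or.inr (Finset.mem_union_left _ ?_))
        exact mem_specF.mpr ⟨x, Finset.mem_filter.mpr ⟨hx, hxB⟩,
          y, Finset.mem_filter.mpr ⟨hy, hyB⟩, hne, hdist⟩
      · refine Finset.mem_insert.mpr (Or.inl ?_)
        rw [← hdist]
        exact cross x (Finset.mem_filter.mpr ⟨hx, hxB⟩)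
          y (Finset.mem_filter.mpr ⟨hy, hyB⟩)
      · refine Finset.mem_insert.mpr (Or.inl ?_)
        rw [← hdist, dist_comm]
        exact cross y (Finset.mem_filter.mpr ⟨hy, hyB⟩)
          x (Finset.mem_filter.mpr ⟨hx, hxB⟩)
      · refine Finset.mem_insert.mpr (Or.inr (Finset.mem_union_right _ ?_))
        exact mem_specF.mpr ⟨x, Finset.mem_filter.mpr ⟨hx, hxB⟩,
          y, Finset.mem_filter.mpr ⟨hy, hyB⟩, hne, hdist⟩
    have hBC : B.card + C.card = A.card := Finset.card_filter_add_card_filter_not _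
    have hBpos : 1 ≤ B.card := Finset.card_pos.mpr ⟨a, haB⟩
    have hCpos : 1 ≤ C.card := Finset.card_pos.mpr ⟨b, hbC⟩
    have hBlt := ih B hBsub
    have hClt := ih C hCsub
    calc (specF A).card ≤ (insert D (specF B ∪ specF C)).card := Finset.card_le_card hsubset
      _ ≤ (specF B ∪ specF C).card + 1 := Finset.card_insert_le _ _
      _ ≤ (specF B).card + (specF C).card + 1 := by
          exact Nat.add_le_add_right (Finset.card_union_le _ _) 1
      _ ≤ A.card - 1 := by omega

/-- If `(X,d)` is a finite ultrametric space with `|X| ≥ 2` and the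
equivalence relation `x ≈ y ↔ d(x,y) < diam X` has exactly `k` equivalence classes
(witnessed by a surjection `c : X → Fin k` whose fibers are the classes), then
`|Sp(X)| ≤ |X| − k + 1`. -/
theorem stmt2 {X : Type*} [MetricSpace X] [Fintype X]
    (hultra : ∀ x y z : X, dist x y ≤ max (dist x z) (dist z y))
    (hcard : 2 ≤ Fintype.card X) (k : ℕ) (c : X → Fin k)
    (hc : Function.Surjective c)
    (hclass : ∀ x y : X, c x = c y ↔ dist x y < Metric.diam (Set.univ : Set X)) :
    (spec (Set.univ : Set X)).ncard ≤ Fintype.card X - k + 1 := by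
  classical
  set Dm := Metric.diam (Set.univ : Set X) with hDm
  have hbdd : Bornology.IsBounded (Set.univ : Set X) := Set.finite_univ.isBounded
  have hdle : ∀ x y : X, dist x y ≤ Dm := fun x y =>
    Metric.dist_le_diam_of_mem hbdd (Set.mem_univ x) (Set.mem_univ y)
  set A : Fin k → Finset X := fun i => Finset.univ.filter (fun x => c x = i) with hAdef
  have hAne : ∀ i, (A i).Nonempty := by
    intro i
    obtain ⟨x, hx⟩ := hc i
    exact ⟨x, Finset.mem_filter.mpr ⟨Finset.mem_univ x, hx⟩⟩
  have hsum : ∑ i, (A i).card = Fintype.card X := by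
    rw [← Finset.card_univ]
    exact (Finset.card_eq_sum_card_fiberwise (fun x _ => Finset.mem_univ (c x))).symm
  have hsubset : specF (Finset.univ : Finset X) ⊆
      insert Dm (Finset.univ.biUnion fun i => specF (A i)) := by
    intro r hr
    obtain ⟨x, _, y, _, hne, hdist⟩ := mem_specF.mp hr
    by_cases hcxy : c x = c y
    · refine Finset.mem_insert.mpr (Or.inr ?_)
      refine Finset.mem_biUnion.mpr ⟨c x, Finset.mem_univ _, ?_⟩
      exact mem_specF.mpr ⟨x, Finset.mem_filter.mpr ⟨Finset.mem_univ x, rfl⟩,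
        y, Finset.mem_filter.mpr ⟨Finset.mem_univ y, hcxy.symm⟩, hne, hdist⟩
    · refine Finset.mem_insert.mpr (Or.inl ?_)
      have : ¬ dist x y < Dm := fun h => hcxy ((hclass x y).mpr h)
      rw [← hdist]
      exact le_antisymm (hdle x y) (not_lt.mp this)
  have hcardle : ∀ i, (specF (A i)).card ≤ (A i).card - 1 := fun i => key hultra (A i)
  have hkle : k ≤ Fintype.card X := by
    calc k = ∑ _i : Fin k, 1 := by simp
      _ ≤ ∑ i, (A i).card := Finset.sum_le_sum (fun i _ => Finset.card_pos.mpr (hAne i))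
      _ = Fintype.card X := hsum
  have hsum3 : ∑ i, ((A i).card - 1) + k = Fintype.card X := by
    have : ∑ i, ((A i).card - 1) + ∑ _i : Fin k, 1 = ∑ i, (A i).card := by
      rw [← Finset.sum_add_distrib]
      exact Finset.sum_congr rfl fun i _ =>
        Nat.succ_pred_eq_of_pos (Finset.card_pos.mpr (hAne i))
    simpa [hsum] using this
  have hsum2 : ∑ i, (specF (A i)).card ≤ Fintype.card X - k := by
    have := Finset.sum_le_sum (fun i (_ : i ∈ Finset.univ) => hcardle i)
    omega
  have hmain : (specF (Finset.univ : Finset X)).card ≤ Fintype.card X - k + 1 := by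
    calc (specF (Finset.univ : Finset X)).card
        ≤ (insert Dm (Finset.univ.biUnion fun i => specF (A i))).card :=
          Finset.card_le_card hsubset
      _ ≤ (Finset.univ.biUnion fun i => specF (A i)).card + 1 := Finset.card_insert_le _ _
      _ ≤ (∑ i, (specF (A i)).card) + 1 :=
          Nat.add_le_add_right (Finset.card_biUnion_le) 1
      _ ≤ Fintype.card X - k + 1 := Nat.add_le_add_right hsum2 1
  have : (spec (Set.univ : Set X)) = ↑(specF (Finset.univ : Finset X)) := by
    rw [← spec_coe, Finset.coe_univ]
  rw [this, Set.ncard_coe_finset]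
  exact hmain
end

section
/- Let (X,d) be a finite ultrametric space with |X| ≥ 2. The following are equivalent: (i) |Sp(X)| = |X| − 1; (ii) for every r ∈ Sp(X), the graph G'_{r,X} is complete bipartite, where G_{r,X} is the simple graph with vertex set X in which distinct u,v are adjacent iff d(u,v) = r, and G'_{r,X} is its induced subgraph on the non-isolated vertices. -/
/-- The graph `G_{r,X}`: vertices are the points of `X`; distinct `u`, `v` are adjacent
iff `dist u v = r`. -/
def distGraph (X : Type*) [MetricSpace X] (r : ℝ) : SimpleGraph X where
  Adj u v := u ≠ v ∧ dist u v = r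
  symm := ⟨fun _ _ ⟨h, hd⟩ => ⟨h.symm, by rwa [dist_comm]⟩⟩
  loopless := ⟨fun _ ⟨h, _⟩ => h rfl⟩

/-- A simple graph `G` has the property that its maximal subgraph `G'` without isolated
vertices is complete bipartite. -/
def NonIsolatedPartCompleteBipartite {V : Type*} (G : SimpleGraph V) : Prop :=
  ∃ A B : Set V, A.Nonempty ∧ B.Nonempty ∧ A ∩ B = ∅ ∧
    A ∪ B = {v : V | ∃ w : V, G.Adj v w} ∧
    ∀ u v : V, G.Adj u v ↔ ((u ∈ A ∧ v ∈ B) ∨ (u ∈ B ∧ v ∈ A))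

section Aux

variable {X : Type*} [MetricSpace X]

/-- Relative version of complete-bipartiteness of the non-isolated part of the
distance-`r` graph, restricted to a subset `S`. -/
def CBPOn (S : Set X) (r : ℝ) : Prop :=
  ∃ A B : Set X, A.Nonempty ∧ B.Nonempty ∧ A ∩ B = ∅ ∧ A ⊆ S ∧ B ⊆ S ∧
    A ∪ B = {v | v ∈ S ∧ ∃ w ∈ S, v ≠ w ∧ dist v w = r} ∧
    ∀ u ∈ S, ∀ v ∈ S, (u ≠ v ∧ dist u v = r) ↔ (u ∈ A ∧ v ∈ B ∨ u ∈ B ∧ v ∈ A)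

lemma spec_mono_s6 {S T : Set X} (h : S ⊆ T) : spec S ⊆ spec T := by
  rintro r ⟨x, hx, y, hy, hxy, hd⟩
  exact ⟨x, h hx, y, h hy, hxy, hd⟩

lemma spec_pos {S : Set X} {r : ℝ} (h : r ∈ spec S) : 0 < r := by
  obtain ⟨x, _, y, _, hxy, hd⟩ := h
  rw [← hd]; exact dist_pos.mpr hxy

lemma spec_subsingleton {S : Set X} (h : S.Subsingleton) : spec S = ∅ := by
  ext r
  simp only [spec, Set.mem_setOf_eq, Set.mem_empty_iff_false, iff_false]
  rintro ⟨x, hx, y, hy, hxy, _⟩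
  exact hxy (h hx hy)

lemma spec_finite_s6 [Finite X] (S : Set X) : (spec S).Finite := by
  apply Set.Finite.subset (Set.finite_range (fun p : X × X => dist p.1 p.2))
  rintro r ⟨x, _, y, _, _, hd⟩
  exact ⟨(x, y), hd⟩

lemma CBPOn_lift {S T : Set X} {r : ℝ} (hTS : T ⊆ S)
    (hedge : ∀ u ∈ S, ∀ v ∈ S, u ≠ v → dist u v = r → u ∈ T ∧ v ∈ T)
    (h : CBPOn T r) : CBPOn S r := by
  obtain ⟨A, B, hA, hB, hAB, hAT, hBT, hcov, hiff⟩ := h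
  refine ⟨A, B, hA, hB, hAB, hAT.trans hTS, hBT.trans hTS, ?_, ?_⟩
  · rw [hcov]
    ext v
    constructor
    · rintro ⟨hv, w, hw, hvw, hd⟩
      exact ⟨hTS hv, w, hTS hw, hvw, hd⟩
    · rintro ⟨hv, w, hw, hvw, hd⟩
      obtain ⟨hvT, hwT⟩ := hedge v hv w hw hvw hd
      exact ⟨hvT, w, hwT, hvw, hd⟩
  · intro u hu v hv
    constructor
    · rintro ⟨hne, hd⟩
      obtain ⟨huT, hvT⟩ := hedge u hu v hv hne hd
      exact (hiff u huT v hvT).mp ⟨hne, hd⟩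
    · intro hc
      rcases hc with ⟨hA', hB'⟩ | ⟨hB', hA'⟩
      · exact (hiff u (hAT hA') v (hBT hB')).mpr (Or.inl ⟨hA', hB'⟩)
      · exact (hiff u (hBT hB') v (hAT hA')).mpr (Or.inr ⟨hB', hA'⟩)

lemma CBPOn_restrict {S T : Set X} {r : ℝ} (hTS : T ⊆ S)
    (hedge : ∀ u ∈ S, ∀ v ∈ S, u ≠ v → dist u v = r → u ∈ T ∧ v ∈ T)
    (h : CBPOn S r) : CBPOn T r := by
  obtain ⟨A, B, hA, hB, hAB, _, _, hcov, hiff⟩ := h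
  have hmem : ∀ a ∈ A ∪ B, a ∈ T := by
    intro a ha
    rw [hcov] at ha
    obtain ⟨haS, w, hw, hne, hd⟩ := ha
    exact (hedge a haS w hw hne hd).1
  have hAT : A ⊆ T := fun a ha => hmem a (Or.inl ha)
  have hBT : B ⊆ T := fun a ha => hmem a (Or.inr ha)
  refine ⟨A, B, hA, hB, hAB, hAT, hBT, ?_, ?_⟩
  · rw [hcov]
    ext v
    constructor
    · rintro ⟨hvS, w, hw, hne, hd⟩
      obtain ⟨hvT, hwT⟩ := hedge v hvS w hw hne hd
      exact ⟨hvT, w, hwT, hne, hd⟩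
    · rintro ⟨hvT, w, hw, hne, hd⟩
      exact ⟨hTS hvT, w, hTS hw, hne, hd⟩
  · intro u hu v hv
    exact hiff u (hTS hu) v (hTS hv)

variable [Fintype X]

/-- Splitting a set with at least two points at its diameter. -/
lemma split_lemma (hultra : ∀ x y z : X, dist x y ≤ max (dist x z) (dist z y))
    {S : Set X} (hsne : (spec S).Nonempty) :
    ∃ d S1 S2, d ∈ spec S ∧ (∀ r ∈ spec S, r ≤ d) ∧
      S1 ∪ S2 = S ∧ S1 ∩ S2 = ∅ ∧ S1.Nonempty ∧ S2.Nonempty ∧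
      (∀ u ∈ S1, ∀ v ∈ S1, dist u v < d) ∧
      (∀ u ∈ S1, ∀ v ∈ S2, dist u v = d) := by
  have hfin : (spec S).Finite := spec_finite_s6 S
  obtain ⟨d, hdmem, hdmax⟩ : ∃ d ∈ spec S, ∀ r ∈ spec S, r ≤ d := by
    have hne' : hfin.toFinset.Nonempty := by
      rwa [Set.Finite.toFinset_nonempty]
    refine ⟨hfin.toFinset.max' hne', ?_, ?_⟩
    · have := hfin.toFinset.max'_mem hne'
      rwa [Set.Finite.mem_toFinset] at this
    · intro r hr
      exact hfin.toFinset.le_max' r (by rwa [Set.Finite.mem_toFinset])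
  have hdpos : 0 < d := spec_pos hdmem
  obtain ⟨a, haS, b, hbS, hab, hdab⟩ := hdmem
  refine ⟨d, {y | y ∈ S ∧ dist a y < d}, {y | y ∈ S ∧ ¬ dist a y < d},
    ⟨a, haS, b, hbS, hab, hdab⟩, hdmax, ?_, ?_, ⟨a, haS, by simpa using hdpos⟩,
    ⟨b, hbS, by simp [hdab]⟩, ?_, ?_⟩
  · ext y
    simp only [Set.mem_union, Set.mem_setOf_eq]
    tauto
  · ext y
    simp only [Set.mem_inter_iff, Set.mem_setOf_eq, Set.mem_empty_iff_false, iff_false]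
    tauto
  · rintro u ⟨huS, hu⟩ v ⟨hvS, hv⟩
    calc dist u v ≤ max (dist u a) (dist a v) := hultra u v a
    _ < d := max_lt (by rwa [dist_comm]) hv
  · rintro u ⟨huS, hu⟩ v ⟨hvS, hv⟩
    have hav : dist a v = d := by
      rcases eq_or_ne a v with h | h
      · exact absurd (by simp [← h, hdpos]) hv
      · exact le_antisymm (hdmax _ ⟨a, haS, v, hvS, h, rfl⟩) (not_lt.mp hv)
    have h1 : dist u v ≤ d := by
      calc dist u v ≤ max (dist u a) (dist a v) := hultra u v a
      _ ≤ d := max_le (le_of_lt (by rwa [dist_comm])) hav.le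
    have h2 : d ≤ dist u v := by
      have := hultra a v u
      rw [hav] at this
      rcases max_cases (dist a u) (dist u v) with ⟨heq, _⟩ | ⟨heq, _⟩
      · rw [heq] at this; exact absurd (lt_of_le_of_lt this hu) (lt_irrefl d)
      · rwa [heq] at this
    exact le_antisymm h1 h2

lemma spec_decomp {S S1 S2 : Set X} {d : ℝ}
    (hun : S1 ∪ S2 = S) (hd : d ∈ spec S)
    (hcross : ∀ u ∈ S1, ∀ v ∈ S2, dist u v = d) :
    spec S = {d} ∪ (spec S1 ∪ spec S2) := by
  apply Set.Subset.antisymm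
  · rintro r ⟨x, hx, y, hy, hxy, hdist⟩
    have hx' : x ∈ S1 ∪ S2 := hun ▸ hx
    have hy' : y ∈ S1 ∪ S2 := hun ▸ hy
    rcases hx' with hx1 | hx2 <;> rcases hy' with hy1 | hy2
    · exact Or.inr (Or.inl ⟨x, hx1, y, hy1, hxy, hdist⟩)
    · refine Or.inl ?_
      simp only [Set.mem_singleton_iff]
      rw [← hdist]; exact hcross x hx1 y hy2
    · refine Or.inl ?_
      simp only [Set.mem_singleton_iff]
      rw [← hdist, dist_comm]; exact hcross y hy1 x hx2
    · exact Or.inr (Or.inr ⟨x, hx2, y, hy2, hxy, hdist⟩)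
  · rintro r (hr | hr | hr)
    · simp only [Set.mem_singleton_iff] at hr; rwa [hr]
    · exact spec_mono_s6 (hun ▸ Set.subset_union_left) hr
    · exact spec_mono_s6 (hun ▸ Set.subset_union_right) hr

lemma spec_card_ineq (hultra : ∀ x y z : X, dist x y ≤ max (dist x z) (dist z y)) :
    ∀ n : ℕ, ∀ S : Set X, S.ncard ≤ n → S.Nonempty → (spec S).ncard + 1 ≤ S.ncard := by
  intro n
  induction n with
  | zero =>
    intro S hle hne
    exact absurd ((Set.ncard_pos (Set.toFinite S)).mpr hne) (by omega)
  | succ n ih =>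
    intro S hle hne
    by_cases hss : S.Subsingleton
    · rw [spec_subsingleton hss]
      simp only [Set.ncard_empty]
      exact (Set.ncard_pos (Set.toFinite S)).mpr hne
    · have hsne : (spec S).Nonempty := by
        rw [Set.not_subsingleton_iff] at hss
        obtain ⟨x, hx, y, hy, hxy⟩ := hss
        exact ⟨dist x y, x, hx, y, hy, hxy, rfl⟩
      obtain ⟨d, S1, S2, hdmem, _, hun, hint, h1ne, h2ne, h11, hcross⟩ := split_lemma hultra hsne
      have hdisj : Disjoint S1 S2 := Set.disjoint_iff_inter_eq_empty.mpr hint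
      have hcards : S1.ncard + S2.ncard = S.ncard := hun ▸ (Set.ncard_union_eq hdisj).symm
      have hc1 : 1 ≤ S1.ncard := (Set.ncard_pos (Set.toFinite _)).mpr h1ne
      have hc2 : 1 ≤ S2.ncard := (Set.ncard_pos (Set.toFinite _)).mpr h2ne
      have ha := ih S1 (by omega) h1ne
      have hb := ih S2 (by omega) h2ne
      have hsub : (spec S).ncard ≤ 1 + ((spec S1).ncard + (spec S2).ncard) := by
        rw [spec_decomp hun hdmem hcross]
        calc ({d} ∪ (spec S1 ∪ spec S2)).ncard
            ≤ ({d} : Set ℝ).ncard + (spec S1 ∪ spec S2).ncard :=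
          Set.ncard_union_le _ _
        _ ≤ 1 + ((spec S1).ncard + (spec S2).ncard) := by
            simp only [Set.ncard_singleton]
            exact Nat.add_le_add_left (Set.ncard_union_le _ _) 1
      omega

set_option maxHeartbeats 1000000 in
lemma main_lemma (hultra : ∀ x y z : X, dist x y ≤ max (dist x z) (dist z y)) :
    ∀ n : ℕ, ∀ S : Set X, S.ncard ≤ n → S.Nonempty →
      ((spec S).ncard + 1 = S.ncard ↔ ∀ r ∈ spec S, CBPOn S r) := by
  intro n
  induction n with
  | zero =>
    intro S hle hne
    exact absurd ((Set.ncard_pos (Set.toFinite S)).mpr hne) (by omega)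
  | succ n ih =>
    intro S hle hne
    by_cases hss : S.Subsingleton
    · rw [spec_subsingleton hss]
      constructor
      · rintro - r hr
        exact absurd hr (Set.notMem_empty r)
      · intro _
        have h1 : S.ncard ≤ 1 := by
          rcases Set.Subsingleton.eq_empty_or_singleton hss with h | ⟨x, h⟩
          · simp [h]
          · simp [h]
        have h2 : 1 ≤ S.ncard := (Set.ncard_pos (Set.toFinite S)).mpr hne
        simp only [Set.ncard_empty]
        omega
    · have hsne : (spec S).Nonempty := by
        rw [Set.not_subsingleton_iff] at hss
        obtain ⟨x, hx, y, hy, hxy⟩ := hss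
        exact ⟨dist x y, x, hx, y, hy, hxy, rfl⟩
      obtain ⟨d, S1, S2, hdmem, hdmax, hun, hint, h1ne, h2ne, h11, hcross⟩ :=
        split_lemma hultra hsne
      have hdpos : 0 < d := spec_pos hdmem
      have hdisj : Disjoint S1 S2 := Set.disjoint_iff_inter_eq_empty.mpr hint
      have hcards : S1.ncard + S2.ncard = S.ncard := hun ▸ (Set.ncard_union_eq hdisj).symm
      have hc1 : 1 ≤ S1.ncard := (Set.ncard_pos (Set.toFinite _)).mpr h1ne
      have hc2 : 1 ≤ S2.ncard := (Set.ncard_pos (Set.toFinite _)).mpr h2ne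
      have hS1S : S1 ⊆ S := hun ▸ Set.subset_union_left
      have hS2S : S2 ⊆ S := hun ▸ Set.subset_union_right
      have hdec := spec_decomp hun hdmem hcross
      have hsp1lt : ∀ r ∈ spec S1, r < d := by
        rintro r ⟨x, hx, y, hy, hxy, hdist⟩
        rw [← hdist]; exact h11 x hx y hy
      have hsp1fin := spec_finite_s6 (X := X) S1
      have hsp2fin := spec_finite_s6 (X := X) S2
      have hnd12 : ∀ x ∈ S1, ∀ y ∈ S2, x ≠ y := by
        intro x hx y hy h
        exact Set.eq_empty_iff_forall_notMem.mp hint x ⟨hx, h ▸ hy⟩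
      have hcross' : ∀ u ∈ S2, ∀ v ∈ S1, dist u v = d := by
        intro u hu v hv
        rw [dist_comm]; exact hcross v hv u hu
      constructor
      · -- (i) → (ii)
        intro heq
        -- squeeze the inequalities
        have ha := spec_card_ineq hultra n S1 (by omega) h1ne
        have hb := spec_card_ineq hultra n S2 (by omega) h2ne
        have e1 := Set.ncard_union_add_ncard_inter ({d} : Set ℝ) (spec S1 ∪ spec S2)
          (Set.finite_singleton d) (hsp1fin.union hsp2fin)
        have e2 := Set.ncard_union_add_ncard_inter (spec S1) (spec S2) hsp1fin hsp2fin
        rw [hdec] at heq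
        simp only [Set.ncard_singleton] at e1
        have hint1 : (({d} : Set ℝ) ∩ (spec S1 ∪ spec S2)).ncard = 0 ∧
            (spec S1 ∩ spec S2).ncard = 0 ∧
            (spec S1).ncard + 1 = S1.ncard ∧ (spec S2).ncard + 1 = S2.ncard := by omega
        obtain ⟨hz1, hz2, heq1, heq2⟩ := hint1
        have hdnot : d ∉ spec S1 ∪ spec S2 := by
          intro hd'
          have : ({d} : Set ℝ) ∩ (spec S1 ∪ spec S2) = ∅ :=
            (Set.ncard_eq_zero (((Set.finite_singleton d)).inter_of_left _)).mp hz1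
          exact Set.eq_empty_iff_forall_notMem.mp this d ⟨rfl, hd'⟩
        have hspdisj : ∀ r, r ∈ spec S1 → r ∈ spec S2 → False := by
          intro r hr1 hr2
          have : spec S1 ∩ spec S2 = ∅ := (Set.ncard_eq_zero (hsp1fin.inter_of_left _)).mp hz2
          exact Set.eq_empty_iff_forall_notMem.mp this r ⟨hr1, hr2⟩
        have hcbp1 := (ih S1 (by omega) h1ne).mp heq1
        have hcbp2 := (ih S2 (by omega) h2ne).mp heq2
        intro r hr
        rw [hdec] at hr
        rcases hr with hr | hr | hr
        · -- r = d : parts are S1 and S2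
          simp only [Set.mem_singleton_iff] at hr
          subst hr
          refine ⟨S1, S2, h1ne, h2ne, hint, hS1S, hS2S, ?_, ?_⟩
          · apply Set.Subset.antisymm
            · rintro v (hv | hv)
              · obtain ⟨w, hw⟩ := h2ne
                exact ⟨hS1S hv, w, hS2S hw, hnd12 v hv w hw, hcross v hv w hw⟩
              · obtain ⟨w, hw⟩ := h1ne
                exact ⟨hS2S hv, w, hS1S hw, fun h => hnd12 w hw v hv h.symm, hcross' v hv w hw⟩
            · rintro v ⟨hvS, _⟩
              exact hun ▸ hvS
          · intro u hu v hv
            constructor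
            · rintro ⟨hne', hdist⟩
              have hu' : u ∈ S1 ∪ S2 := hun ▸ hu
              have hv' : v ∈ S1 ∪ S2 := hun ▸ hv
              rcases hu' with hu1 | hu2 <;> rcases hv' with hv1 | hv2
              · exact absurd hdist (ne_of_lt (h11 u hu1 v hv1))
              · exact Or.inl ⟨hu1, hv2⟩
              · exact Or.inr ⟨hu2, hv1⟩
              · exfalso
                exact hdnot (Set.mem_union_right _ ⟨u, hu2, v, hv2, hne', hdist⟩)
            · rintro (⟨hu1, hv2⟩ | ⟨hu2, hv1⟩)
              · exact ⟨hnd12 u hu1 v hv2, hcross u hu1 v hv2⟩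
              · exact ⟨fun h => hnd12 v hv1 u hu2 h.symm, hcross' u hu2 v hv1⟩
        · -- r ∈ spec S1
          have hrd : r < d := hsp1lt r hr
          refine CBPOn_lift hS1S ?_ (hcbp1 r hr)
          intro u hu v hv hne' hdist
          have hu' : u ∈ S1 ∪ S2 := hun ▸ hu
          have hv' : v ∈ S1 ∪ S2 := hun ▸ hv
          rcases hu' with hu1 | hu2 <;> rcases hv' with hv1 | hv2
          · exact ⟨hu1, hv1⟩
          · exfalso
            have h := hcross u hu1 v hv2
            rw [hdist] at h
            exact absurd h (ne_of_lt hrd)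
          · exfalso
            have h := hcross' u hu2 v hv1
            rw [hdist] at h
            exact absurd h (ne_of_lt hrd)
          · exact absurd hr (fun hr1 => hspdisj r hr1 ⟨u, hu2, v, hv2, hne', hdist⟩)
        · -- r ∈ spec S2
          have hrd : r ≠ d := fun h => hdnot (h ▸ Or.inr hr)
          refine CBPOn_lift hS2S ?_ (hcbp2 r hr)
          intro u hu v hv hne' hdist
          have hu' : u ∈ S1 ∪ S2 := hun ▸ hu
          have hv' : v ∈ S1 ∪ S2 := hun ▸ hv
          rcases hu' with hu1 | hu2 <;> rcases hv' with hv1 | hv2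
          · exact absurd hr (fun hr2 => hspdisj r ⟨u, hu1, v, hv1, hne', hdist⟩ hr2)
          · exfalso
            have h := hcross u hu1 v hv2
            rw [hdist] at h
            exact hrd h
          · exfalso
            have h := hcross' u hu2 v hv1
            rw [hdist] at h
            exact hrd h
          · exact ⟨hu2, hv2⟩
      · -- (ii) → (i)
        intro hcbp
        -- (a) no distance d inside S2
        have hd2 : d ∉ spec S2 := by
          rintro ⟨u, hu, v, hv, huv, hduv⟩
          obtain ⟨A, B, _, _, hAB, _, _, _, hiff⟩ := hcbp d hdmem
          obtain ⟨x0, hx0⟩ := h1ne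
          have hABe : ∀ x, x ∈ A → x ∈ B → False := by
            intro x h1 h2
            exact Set.eq_empty_iff_forall_notMem.mp hAB x ⟨h1, h2⟩
          have e1 := (hiff x0 (hS1S hx0) u (hS2S hu)).mp
            ⟨hnd12 x0 hx0 u hu, hcross x0 hx0 u hu⟩
          have e2 := (hiff x0 (hS1S hx0) v (hS2S hv)).mp
            ⟨hnd12 x0 hx0 v hv, hcross x0 hx0 v hv⟩
          have e3 := (hiff u (hS2S hu) v (hS2S hv)).mp ⟨huv, hduv⟩
          rcases e1 with ⟨h1, h2⟩ | ⟨h1, h2⟩ <;> rcases e2 with ⟨h3, h4⟩ | ⟨h3, h4⟩ <;>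
            rcases e3 with ⟨h5, h6⟩ | ⟨h5, h6⟩ <;>
            first
            | exact hABe _ h5 h2
            | exact hABe _ h2 h5
            | exact hABe _ h6 h4
            | exact hABe _ h4 h6
            | exact hABe _ h1 h3
            | exact hABe _ h3 h1
        -- (b) spectra of S1 and S2 are disjoint
        have hspdisj : ∀ r, r ∈ spec S1 → r ∈ spec S2 → False := by
          rintro r ⟨u1, hu1, v1, hv1, hne1, hd1⟩ ⟨u2, hu2, v2, hv2, hne2, hd2'⟩
          have hrd : r ≠ d := fun h => hd2 (h ▸ ⟨u2, hu2, v2, hv2, hne2, hd2'⟩)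
          have hrS : r ∈ spec S := ⟨u1, hS1S hu1, v1, hS1S hv1, hne1, hd1⟩
          obtain ⟨A, B, _, _, hAB, _, _, _, hiff⟩ := hcbp r hrS
          have hcr : ∀ x ∈ S1, ∀ y ∈ S2, ¬(x ∈ A ∧ y ∈ B ∨ x ∈ B ∧ y ∈ A) := by
            intro x hx y hy hmem
            have hxy := (hiff x (hS1S hx) y (hS2S hy)).mpr hmem
            have hd' := hcross x hx y hy
            rw [hxy.2] at hd'
            exact hrd hd'
          have e1 := (hiff u1 (hS1S hu1) v1 (hS1S hv1)).mp ⟨hne1, hd1⟩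
          have e2 := (hiff u2 (hS2S hu2) v2 (hS2S hv2)).mp ⟨hne2, hd2'⟩
          rcases e1 with ⟨h1, h2⟩ | ⟨h1, h2⟩ <;> rcases e2 with ⟨h3, h4⟩ | ⟨h3, h4⟩
          · exact hcr u1 hu1 v2 hv2 (Or.inl ⟨h1, h4⟩)
          · exact hcr u1 hu1 u2 hu2 (Or.inl ⟨h1, h3⟩)
          · exact hcr v1 hv1 v2 hv2 (Or.inl ⟨h2, h4⟩)
          · exact hcr v1 hv1 u2 hu2 (Or.inl ⟨h2, h3⟩)
        -- (c) induced CBP on the parts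
        have hedge1 : ∀ r, r ∈ spec S1 →
            ∀ u ∈ S, ∀ v ∈ S, u ≠ v → dist u v = r → u ∈ S1 ∧ v ∈ S1 := by
          intro r hr u hu v hv hne' hdist
          have hrd : r < d := hsp1lt r hr
          have hu' : u ∈ S1 ∪ S2 := hun ▸ hu
          have hv' : v ∈ S1 ∪ S2 := hun ▸ hv
          rcases hu' with hu1 | hu2 <;> rcases hv' with hv1 | hv2
          · exact ⟨hu1, hv1⟩
          · exfalso
            have h := hcross u hu1 v hv2
            rw [hdist] at h
            exact absurd h (ne_of_lt hrd)
          · exfalso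
            have h := hcross' u hu2 v hv1
            rw [hdist] at h
            exact absurd h (ne_of_lt hrd)
          · exact absurd hr (fun hr1 => hspdisj r hr1 ⟨u, hu2, v, hv2, hne', hdist⟩)
        have hedge2 : ∀ r, r ∈ spec S2 →
            ∀ u ∈ S, ∀ v ∈ S, u ≠ v → dist u v = r → u ∈ S2 ∧ v ∈ S2 := by
          intro r hr u hu v hv hne' hdist
          have hrd : r ≠ d := fun h => hd2 (h ▸ hr)
          have hu' : u ∈ S1 ∪ S2 := hun ▸ hu
          have hv' : v ∈ S1 ∪ S2 := hun ▸ hv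
          rcases hu' with hu1 | hu2 <;> rcases hv' with hv1 | hv2
          · exact absurd hr (fun hr2 => hspdisj r ⟨u, hu1, v, hv1, hne', hdist⟩ hr2)
          · exfalso
            have h := hcross u hu1 v hv2
            rw [hdist] at h
            exact hrd h
          · exfalso
            have h := hcross' u hu2 v hv1
            rw [hdist] at h
            exact hrd h
          · exact ⟨hu2, hv2⟩
        have hcbp1 : ∀ r ∈ spec S1, CBPOn S1 r := fun r hr =>
          CBPOn_restrict hS1S (hedge1 r hr) (hcbp r (spec_mono_s6 hS1S hr))
        have hcbp2 : ∀ r ∈ spec S2, CBPOn S2 r := fun r hr =>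
          CBPOn_restrict hS2S (hedge2 r hr) (hcbp r (spec_mono_s6 hS2S hr))
        have heq1 := (ih S1 (by omega) h1ne).mpr hcbp1
        have heq2 := (ih S2 (by omega) h2ne).mpr hcbp2
        -- assemble counts
        have hd1 : d ∉ spec S1 := fun h => absurd rfl (ne_of_lt (hsp1lt d h))
        have hdisj12 : Disjoint (spec S1) (spec S2) :=
          Set.disjoint_left.mpr (fun r h1 h2 => hspdisj r h1 h2)
        have hdisjd : Disjoint ({d} : Set ℝ) (spec S1 ∪ spec S2) := by
          rw [Set.disjoint_left]
          rintro r hr (h1 | h2)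
          · exact hd1 (Set.mem_singleton_iff.mp hr ▸ h1)
          · exact hd2 (Set.mem_singleton_iff.mp hr ▸ h2)
        rw [hdec, Set.ncard_union_eq hdisjd (Set.finite_singleton d) (hsp1fin.union hsp2fin),
          Set.ncard_union_eq hdisj12 hsp1fin hsp2fin, Set.ncard_singleton]
        omega

lemma cbp_univ_iff {r : ℝ} :
    CBPOn (Set.univ : Set X) r ↔ NonIsolatedPartCompleteBipartite (distGraph X r) := by
  have hadj : ∀ u v : X, (distGraph X r).Adj u v ↔ (u ≠ v ∧ dist u v = r) := fun u v => Iff.rfl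
  constructor
  · rintro ⟨A, B, hA, hB, hAB, -, -, hcov, hiff⟩
    refine ⟨A, B, hA, hB, hAB, ?_, ?_⟩
    · rw [hcov]
      ext v
      simp only [Set.mem_setOf_eq, Set.mem_univ, true_and, hadj] <;> tauto
    · intro u v
      rw [hadj]
      exact hiff u trivial v trivial
  · rintro ⟨A, B, hA, hB, hAB, hcov, hiff⟩
    refine ⟨A, B, hA, hB, hAB, Set.subset_univ _, Set.subset_univ _, ?_, ?_⟩
    · rw [hcov]
      ext v
      simp only [Set.mem_setOf_eq, Set.mem_univ, true_and, hadj] <;> tauto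
    · intro u _ v _
      rw [← hadj]
      exact hiff u v

end Aux

/-- For a finite ultrametric space `(X,d)` with `|X| ≥ 2`, the following
are equivalent: (i) `|Sp(X)| = |X| − 1`; (ii) for every `r ∈ Sp(X)` the graph
`G'_{r,X}` (the subgraph of `G_{r,X}` induced on its non-isolated vertices) is
complete bipartite. -/
theorem stmt6 {X : Type*} [MetricSpace X] [Fintype X]
    (hultra : ∀ x y z : X, dist x y ≤ max (dist x z) (dist z y))
    (hcard : 2 ≤ Fintype.card X) :
    (spec (Set.univ : Set X)).ncard = Fintype.card X - 1 ↔
      ∀ r ∈ spec (Set.univ : Set X), NonIsolatedPartCompleteBipartite (distGraph X r) := by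
  have h1 : (Set.univ : Set X).ncard = Fintype.card X := by
    rw [Set.ncard_univ, Nat.card_eq_fintype_card]
  have hne : (Set.univ : Set X).Nonempty := by
    have : Nonempty X := Fintype.card_pos_iff.mp (by omega)
    exact Set.univ_nonempty
  have key := main_lemma hultra (Set.univ : Set X).ncard (Set.univ : Set X) le_rfl hne
  constructor
  · intro h r hr
    exact cbp_univ_iff.mp (key.mp (by omega) r hr)
  · intro h
    have := key.mpr (fun r hr => cbp_univ_iff.mpr (h r hr))
    omega
end

section
/- Let (X,d) be a finite ultrametric space with |X| ≥ 2 whose diametral graph G_d is complete bipartite with parts X₁ and X₂, and suppose diam X₁ > 0 (diameter of the metric subspace (X₁,d)). Then X₁ ∈ 𝐁_X; more precisely, for every x₁ ∈ X₁ one has B_{diam X₁}(x₁) = X₁, and there exists x₁ ∈ X₁ with diam X₁ ∈ Sp_{x₁}(X). -/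
/-- The family `𝐁_X` of all closed balls `B_r(t)` of a metric space `X` with
`t ∈ X` and `r ∈ Sp_t(X) = {d(x,t) : x ≠ t}`. -/
def ballFamily (X : Type*) [MetricSpace X] : Set (Set X) :=
  {B : Set X | ∃ t : X, ∃ r : ℝ, (∃ x : X, x ≠ t ∧ dist x t = r) ∧
    B = Metric.closedBall t r}

lemma exists_dist_eq_diam_of_finite {X : Type*} [MetricSpace X] {s : Set X}
    (hs : s.Finite) (hne : s.Nonempty) :
    ∃ a ∈ s, ∃ b ∈ s, dist a b = Metric.diam s := by
  have hfin : (s ×ˢ s).Finite := hs.prod hs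
  have hne2 : (s ×ˢ s).Nonempty := hne.prod hne
  obtain ⟨⟨a, b⟩, hab, hmax⟩ := Set.Finite.exists_maximalFor
    (fun p => dist p.1 p.2) _ hfin hne2
  refine ⟨a, hab.1, b, hab.2, le_antisymm
    (Metric.dist_le_diam_of_mem (hs.isBounded) hab.1 hab.2) ?_⟩
  apply Metric.diam_le_of_forall_dist_le dist_nonneg
  intro x hx y hy
  by_contra h
  push_neg at h
  exact absurd (hmax (j := (x, y)) ⟨hx, hy⟩ h.le) (not_le.mpr h)

/-- Let `(X,d)` be a finite ultrametric space with `|X| ≥ 2` whose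
diametral graph is complete bipartite with parts `X₁`, `X₂`, and suppose
`diam X₁ > 0`. Then `X₁ ∈ 𝐁_X`; more precisely `B_{diam X₁}(x₁) = X₁` for every
`x₁ ∈ X₁`, and `diam X₁ ∈ Sp_{x₁}(X)` for some `x₁ ∈ X₁`. -/
theorem stmt10 {X : Type*} [MetricSpace X] [Fintype X]
    (hultra : ∀ x y z : X, dist x y ≤ max (dist x z) (dist z y))
    (hcard : 2 ≤ Fintype.card X)
    (X₁ X₂ : Set X) (h₁ : X₁.Nonempty) (h₂ : X₂.Nonempty)
    (hdisj : X₁ ∩ X₂ = ∅) (hunion : X₁ ∪ X₂ = Set.univ)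
    (hbip : ∀ u v : X, dist u v = Metric.diam (Set.univ : Set X) ↔
      ((u ∈ X₁ ∧ v ∈ X₂) ∨ (u ∈ X₂ ∧ v ∈ X₁)))
    (hdiam₁ : 0 < Metric.diam X₁) :
    X₁ ∈ ballFamily X ∧
      (∀ x₁ ∈ X₁, Metric.closedBall x₁ (Metric.diam X₁) = X₁) ∧
      ∃ x₁ ∈ X₁, ∃ x : X, x ≠ x₁ ∧ dist x x₁ = Metric.diam X₁ := by
  have hfin : X₁.Finite := Set.toFinite _
  obtain ⟨a, ha, b, hb, hab⟩ := exists_dist_eq_diam_of_finite hfin h₁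
  have hanb : a ∉ X₂ := fun h => by
    have := hdisj ▸ (Set.mem_inter ha h); exact this
  have hbnb : b ∉ X₂ := fun h => by
    have := hdisj ▸ (Set.mem_inter hb h); exact this
  have hlt : Metric.diam X₁ < Metric.diam (Set.univ : Set X) := by
    have hle : dist a b ≤ Metric.diam (Set.univ : Set X) :=
      Metric.dist_le_diam_of_mem (Set.toFinite _).isBounded trivial trivial
    have hne : dist a b ≠ Metric.diam (Set.univ : Set X) := by
      intro h
      rcases (hbip a b).mp h with ⟨_, h'⟩ | ⟨h', _⟩
      · exact hbnb h'
      · exact hanb h'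
    rw [← hab]; exact lt_of_le_of_ne hle hne
  have hball : ∀ x₁ ∈ X₁, Metric.closedBall x₁ (Metric.diam X₁) = X₁ := by
    intro x₁ hx₁
    ext y
    simp only [Metric.mem_closedBall]
    constructor
    · intro hy
      by_contra hyn
      have hy2 : y ∈ X₂ := by
        have := hunion ▸ (Set.mem_univ y)
        rcases this with h | h
        · exact absurd h hyn
        · exact h
      have : dist y x₁ = Metric.diam (Set.univ : Set X) :=
        (hbip y x₁).mpr (Or.inr ⟨hy2, hx₁⟩)
      linarith
    · intro hy
      exact Metric.dist_le_diam_of_mem hfin.isBounded hy hx₁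
  have hane : a ≠ b := by
    intro h; rw [h, dist_self] at hab; linarith
  refine ⟨⟨b, Metric.diam X₁, ⟨a, hane, hab⟩, (hball b hb).symm⟩, hball,
    b, hb, a, hane, hab⟩
end

section
/- Let (X,d) be a finite ultrametric space, let Y ⊆ X with Y ∈ 𝐁_X, regard (Y,d) as a metric subspace of X, and let Z ⊆ Y with Z ∈ 𝐁_Y. Then Z ∈ 𝐁_X. -/
/-- The family `𝐁_A` of closed balls of the metric subspace `(A,d)` of `X`,
regarded as subsets of `X`: the sets `{y ∈ A | d(y,t) ≤ r}` with `t ∈ A` and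
`r ∈ Sp_t(A) = {d(x,t) : x ∈ A, x ≠ t}`. -/
def ballFamilyIn {X : Type*} [MetricSpace X] (A : Set X) : Set (Set X) :=
  {B : Set X | ∃ t ∈ A, ∃ r : ℝ, (∃ x ∈ A, x ≠ t ∧ dist x t = r) ∧
    B = {y ∈ A | dist y t ≤ r}}

/-- Let `(X,d)` be a finite ultrametric space, `Y ⊆ X` with `Y ∈ 𝐁_X`
(`(Y,d)` regarded as a metric subspace of `X`), and `Z ⊆ Y` with `Z ∈ 𝐁_Y`. Then
`Z ∈ 𝐁_X`. -/
theorem stmt11 {X : Type*} [MetricSpace X] [Fintype X]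
    (hultra : ∀ x y z : X, dist x y ≤ max (dist x z) (dist z y))
    (Y Z : Set X) (hYX : Y ∈ ballFamilyIn (Set.univ : Set X))
    (hZY : Z ⊆ Y) (hZ : Z ∈ ballFamilyIn Y) :
    Z ∈ ballFamilyIn (Set.univ : Set X) := by
  obtain ⟨t, -, r, ⟨x, -, hxt, hxr⟩, hY⟩ := hYX
  obtain ⟨s, hsY, ρ, ⟨w, hwY, hws, hwρ⟩, hZeq⟩ := hZ
  -- s, w ∈ Y, so dist s t ≤ r and dist w t ≤ r
  have hst : dist s t ≤ r := by rw [hY] at hsY; exact hsY.2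
  have hwt : dist w t ≤ r := by rw [hY] at hwY; exact hwY.2
  have hρr : ρ ≤ r := by
    rw [← hwρ]
    calc dist w s ≤ max (dist w t) (dist t s) := hultra w s t
    _ ≤ r := max_le hwt (by rwa [dist_comm])
  refine ⟨s, trivial, ρ, ⟨w, trivial, hws, hwρ⟩, ?_⟩
  rw [hZeq]
  ext y
  simp only [Set.mem_setOf_eq, Set.mem_univ, true_and]
  constructor
  · rintro ⟨-, h⟩; exact h
  · intro h
    refine ⟨?_, h⟩
    rw [hY]
    refine ⟨trivial, ?_⟩
    calc dist y t ≤ max (dist y s) (dist s t) := hultra y t s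
    _ ≤ r := max_le (h.trans hρr) hst
end

section
/- Let (X,d) be a finite nonempty ultrametric space. Then |𝐁_X| ≤ |X| − 1, where 𝐁_X is the family of all closed balls B_r(t) with t ∈ X and r ∈ Sp_t(X), counted as distinct subsets of X. -/
open Classical in
/-- Balls of the finite subspace `S`, as a finset of finsets. -/
noncomputable def ballsF {X : Type*} [MetricSpace X] (S : Finset X) : Finset (Finset X) :=
  S.powerset.filter (fun B => ∃ t ∈ S, ∃ x ∈ S, x ≠ t ∧
    B = S.filter (fun y => dist y t ≤ dist x t))

theorem ballsF_card {X : Type*} [MetricSpace X]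
    (hultra : ∀ x y z : X, dist x y ≤ max (dist x z) (dist z y))
    (S : Finset X) : (ballsF S).card ≤ S.card - 1 := by
  classical
  induction S using Finset.strongInductionOn with
  | _ S ih =>
    by_cases h : ∃ t ∈ S, ∃ x ∈ S, x ≠ t
    · obtain ⟨t0, ht0, x0, hx0, hne0⟩ := h
      -- a maximizing pair
      have hSS : (S ×ˢ S).Nonempty := ⟨(t0, x0), by simp [ht0, hx0]⟩
      obtain ⟨p, hp, hmax⟩ := Finset.exists_max_image (S ×ˢ S) (fun p => dist p.1 p.2) hSS
      obtain ⟨a, b⟩ := p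
      rw [Finset.mem_product] at hp
      obtain ⟨ha, hb⟩ := hp
      set D := dist a b with hD
      have hmax' : ∀ x ∈ S, ∀ y ∈ S, dist x y ≤ D := by
        intro x hx y hy
        exact hmax (x, y) (by simp [hx, hy])
      have hDpos : 0 < D := by
        have := hmax' x0 hx0 t0 ht0
        have := dist_pos.mpr hne0
        linarith
      set C : X → Finset X := fun t => S.filter (fun y => dist y t < D) with hC
      have hmemC : ∀ t ∈ S, t ∈ C t := by
        intro t ht; simp [hC, ht, hDpos]
      have hCsub : ∀ t, C t ⊆ S := fun t => Finset.filter_subset _ _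
      -- classes are equal when they intersect
      have hclass : ∀ t ∈ S, ∀ t' ∈ S, ∀ y, y ∈ C t → y ∈ C t' → C t = C t' := by
        intro t ht t' ht' y hy hy'
        simp only [hC, Finset.mem_filter] at hy hy'
        have htt' : dist t t' < D := by
          have := hultra t t' y
          have := dist_comm y t
          simp only [max_le_iff] at *
          rcases le_max_iff.mp (hultra t t' y) with h1 | h1
          · calc dist t t' ≤ dist t y := h1
              _ = dist y t := dist_comm t y
              _ < D := hy.2
          · exact lt_of_le_of_lt h1 hy'.2
        ext z
        simp only [hC, Finset.mem_filter]
        constructor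
        · rintro ⟨hz, hzt⟩
          refine ⟨hz, ?_⟩
          rcases le_max_iff.mp (hultra z t' t) with h1 | h1
          · calc dist z t' ≤ dist z t := h1
              _ < D := hzt
          · exact lt_of_le_of_lt h1 htt'
        · rintro ⟨hz, hzt'⟩
          refine ⟨hz, ?_⟩
          rcases le_max_iff.mp (hultra z t t') with h1 | h1
          · exact lt_of_le_of_lt h1 hzt'
          · calc dist z t ≤ dist t' t := h1
              _ = dist t t' := dist_comm t' t
              _ < D := htt'
      set T : Finset (Finset X) := S.image C with hT
      -- the classes cover S disjointly
      have hcover : T.biUnion id = S := by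
        apply Finset.Subset.antisymm
        · intro y hy
          simp only [Finset.mem_biUnion, hT, Finset.mem_image, id] at hy
          obtain ⟨K, ⟨t, ht, rfl⟩, hyK⟩ := hy
          exact hCsub t hyK
        · intro y hy
          simp only [Finset.mem_biUnion, hT, Finset.mem_image, id]
          exact ⟨C y, ⟨y, hy, rfl⟩, hmemC y hy⟩
      have hdisj : ∀ K1 ∈ T, ∀ K2 ∈ T, K1 ≠ K2 → Disjoint K1 K2 := by
        intro K1 hK1 K2 hK2 hne
        simp only [hT, Finset.mem_image] at hK1 hK2
        obtain ⟨t1, ht1, rfl⟩ := hK1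
        obtain ⟨t2, ht2, rfl⟩ := hK2
        rw [Finset.disjoint_left]
        intro y hy1 hy2
        exact hne (hclass t1 ht1 t2 ht2 y hy1 hy2)
      have hsum : ∑ K ∈ T, K.card = S.card := by
        conv_rhs => rw [← hcover]
        exact (Finset.card_biUnion hdisj).symm
      -- at least two classes
      have hab : dist a b = D := rfl
      have haneb : a ≠ b := by
        intro hh; rw [hh] at hD; simp [hD] at hDpos
      have hbna : b ∉ C a := by
        simp only [hC, Finset.mem_filter, not_and, not_lt]
        intro _
        rw [dist_comm]
      have hT2 : 2 ≤ T.card := by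
        have h1 : C a ∈ T := Finset.mem_image_of_mem C ha
        have h2 : C b ∈ T := Finset.mem_image_of_mem C hb
        have hne : C a ≠ C b := by
          intro hh
          exact hbna (hh ▸ hmemC b hb)
        calc 2 = ({C a, C b} : Finset (Finset X)).card := by
              rw [Finset.card_insert_of_notMem (by simpa using hne)]; simp
          _ ≤ T.card := Finset.card_le_card (by
              intro K hK
              simp only [Finset.mem_insert, Finset.mem_singleton] at hK
              rcases hK with rfl | rfl <;> assumption)
      -- each class is a strict subset
      have hKlt : ∀ K ∈ T, K ⊂ S := by
        intro K hK
        simp only [hT, Finset.mem_image] at hK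
        obtain ⟨t, ht, rfl⟩ := hK
        refine Finset.ssubset_iff_of_subset (hCsub t) |>.mpr ?_
        by_cases hbt : b ∈ C t
        · refine ⟨a, ha, fun hat => ?_⟩
          simp only [hC, Finset.mem_filter] at hat hbt
          have : dist a b < D := by
            rcases le_max_iff.mp (hultra a b t) with h1 | h1
            · exact lt_of_le_of_lt h1 hat.2
            · calc dist a b ≤ dist t b := h1
                _ = dist b t := dist_comm t b
                _ < D := hbt.2
          exact absurd hab (ne_of_lt this)
        · exact ⟨b, hb, hbt⟩
      -- the key inclusion
      have hincl : ballsF S ⊆ insert S (T.biUnion ballsF) := by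
        intro B hB
        simp only [ballsF, Finset.mem_filter, Finset.mem_powerset] at hB
        obtain ⟨hBS, t, ht, x, hx, hxt, hBeq⟩ := hB
        by_cases hxD : dist x t < D
        · refine Finset.mem_insert_of_mem ?_
          rw [Finset.mem_biUnion]
          refine ⟨C t, Finset.mem_image_of_mem C ht, ?_⟩
          have hxC : x ∈ C t := by simp [hC, hx, hxD]
          have hBeq' : B = (C t).filter (fun y => dist y t ≤ dist x t) := by
            rw [hBeq]
            ext y
            simp only [Finset.mem_filter, hC]
            constructor
            · rintro ⟨hy, hyd⟩
              exact ⟨⟨hy, lt_of_le_of_lt hyd hxD⟩, hyd⟩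
            · rintro ⟨⟨hy, _⟩, hyd⟩
              exact ⟨hy, hyd⟩
          simp only [ballsF, Finset.mem_filter, Finset.mem_powerset]
          refine ⟨by rw [hBeq']; exact Finset.filter_subset _ _,
            t, hmemC t ht, x, hxC, hxt, ?_⟩
          convert hBeq' using 2
        · have hBS' : B = S := by
            rw [hBeq]
            apply Finset.filter_true_of_mem
            intro y hy
            calc dist y t ≤ D := hmax' y hy t ht
              _ ≤ dist x t := not_lt.mp hxD
          rw [hBS']
          exact Finset.mem_insert_self S _
      -- counting
      have hKne : ∀ K ∈ T, 1 ≤ K.card := by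
        intro K hK
        simp only [hT, Finset.mem_image] at hK
        obtain ⟨t, ht, rfl⟩ := hK
        exact Finset.card_pos.mpr ⟨t, hmemC t ht⟩
      have hchain : (ballsF S).card ≤ 1 + ∑ K ∈ T, (ballsF K).card := by
        calc (ballsF S).card ≤ (insert S (T.biUnion ballsF)).card :=
              Finset.card_le_card hincl
          _ ≤ 1 + (T.biUnion ballsF).card := by
              rw [add_comm]; exact Finset.card_insert_le _ _
          _ ≤ 1 + ∑ K ∈ T, (ballsF K).card := by
              exact Nat.add_le_add_left (Finset.card_biUnion_le) 1
      have hih : ∑ K ∈ T, (ballsF K).card ≤ ∑ K ∈ T, (K.card - 1) :=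
        Finset.sum_le_sum (fun K hK => ih K (hKlt K hK))
      have hsum' : ∑ K ∈ T, (K.card - 1) + T.card = S.card := by
        have h1 : ∑ K ∈ T, (K.card - 1 + 1) = ∑ K ∈ T, K.card :=
          Finset.sum_congr rfl (fun K hK => by have := hKne K hK; omega)
        rw [Finset.sum_add_distrib, Finset.sum_const, smul_eq_mul, mul_one] at h1
        omega
      omega
    · have : ballsF S = ∅ := by
        ext B
        simp only [ballsF, Finset.mem_filter, Finset.mem_powerset, Finset.notMem_empty,
          iff_false, not_and]
        rintro _ ⟨t, ht, x, hx, hxt, _⟩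
        exact h ⟨t, ht, x, hx, hxt⟩
      simp [this]


/-- For a finite nonempty ultrametric space `(X,d)`,
`|𝐁_X| ≤ |X| − 1` (balls counted as distinct subsets of `X`). -/
theorem stmt12 {X : Type*} [MetricSpace X] [Fintype X] [Nonempty X]
    (hultra : ∀ x y z : X, dist x y ≤ max (dist x z) (dist z y)) :
    (ballFamily X).ncard ≤ Fintype.card X - 1 := by
  classical
  have key := ballsF_card hultra (Finset.univ : Finset X)
  rw [Finset.card_univ] at key
  refine le_trans ?_ key
  rw [← Set.ncard_coe_finset]
  apply Set.ncard_le_ncard_of_injOn (fun B => Finset.univ.filter (fun y => y ∈ B))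
  · rintro B ⟨t, r, ⟨x, hxt, hdx⟩, rfl⟩
    simp only [Finset.coe_mem, ballsF, Finset.mem_coe, Finset.mem_filter,
      Finset.mem_powerset]
    refine ⟨Finset.filter_subset _ _, t, Finset.mem_univ t, x, Finset.mem_univ x, hxt, ?_⟩
    ext y
    simp [Metric.mem_closedBall, hdx]
  · intro B1 h1 B2 h2 heq
    ext y
    have := Finset.ext_iff.mp heq y
    simpa using this
end

section
/- Let (X,d) be a finite nonempty ultrametric space and let ε > 0. Then there exists an ultrametric ρ on the same set X such that |Sp(X,ρ)| = |X| − 1 and |d(x,y) − ρ(x,y)| < ε for all x,y ∈ X. -/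
/-- `ρ` is an ultrametric on `X`: it vanishes exactly on the diagonal, is symmetric,
and satisfies the strong triangle inequality. -/
def IsUltrametric {X : Type*} (ρ : X → X → ℝ) : Prop :=
  (∀ x y : X, ρ x y = 0 ↔ x = y) ∧ (∀ x y : X, ρ x y = ρ y x) ∧
    ∀ x y z : X, ρ x y ≤ max (ρ x z) (ρ z y)

/-- The spectrum of a distance function `ρ` on `X`: the set of values `ρ x y` with
`x ≠ y`. -/
def specOf {X : Type*} (ρ : X → X → ℝ) : Set ℝ :=
  {r : ℝ | ∃ x y : X, x ≠ y ∧ ρ x y = r}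


noncomputable def chainSup (f : ℕ → ℝ) (i j : ℕ) : ℝ :=
  if h : i < j then (Finset.Ioc i j).sup' ⟨j, Finset.mem_Ioc.mpr ⟨h, le_refl j⟩⟩ f else 0

lemma chainSup_eq (f : ℕ → ℝ) {i j : ℕ} (h : i < j) :
    chainSup f i j = (Finset.Ioc i j).sup' ⟨j, Finset.mem_Ioc.mpr ⟨h, le_refl j⟩⟩ f :=
  dif_pos h

lemma le_chainSup (f : ℕ → ℝ) {i j k : ℕ} (hk : k ∈ Finset.Ioc i j) :
    f k ≤ chainSup f i j := by
  have h : i < j := lt_of_lt_of_le (Finset.mem_Ioc.1 hk).1 (Finset.mem_Ioc.1 hk).2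
  rw [chainSup_eq f h]
  exact Finset.le_sup' f hk

lemma chainSup_le (f : ℕ → ℝ) {i j : ℕ} (h : i < j) {c : ℝ}
    (H : ∀ k ∈ Finset.Ioc i j, f k ≤ c) : chainSup f i j ≤ c := by
  rw [chainSup_eq f h]
  exact Finset.sup'_le _ f H

lemma exists_chainSup (f : ℕ → ℝ) {i j : ℕ} (h : i < j) :
    ∃ m ∈ Finset.Ioc i j, chainSup f i j = f m := by
  rw [chainSup_eq f h]
  exact Finset.exists_mem_eq_sup' _ f

lemma chainSup_mono (f : ℕ → ℝ) {i j i' j' : ℕ} (h : i < j)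
    (hsub : Finset.Ioc i j ⊆ Finset.Ioc i' j') : chainSup f i j ≤ chainSup f i' j' :=
  chainSup_le f h fun k hk => le_chainSup f (hsub hk)

/-- Generic chain inequality in an ultrametric space. -/
lemma chain_le {X : Type*} [MetricSpace X]
    (hultra : ∀ x y z : X, dist x y ≤ max (dist x z) (dist z y)) (x₀ : X) (l : List X)
    {i j : ℕ} (hij : i < j) (hj : j < l.length) :
    dist (l.getD i x₀) (l.getD j x₀) ≤
      chainSup (fun k => dist (l.getD (k-1) x₀) (l.getD k x₀)) i j := by
  induction j, hij using Nat.le_induction with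
  | base =>
    have : dist (l.getD i x₀) (l.getD (i+1) x₀)
        = (fun k => dist (l.getD (k-1) x₀) (l.getD k x₀)) (i+1) := by simp
    rw [this]
    exact le_chainSup (fun k => dist (l.getD (k-1) x₀) (l.getD k x₀)) (Finset.mem_Ioc.2 ⟨Nat.lt_succ_self i, le_refl _⟩)
  | succ j hij ih =>
    have hj' : j < l.length := Nat.lt_of_succ_lt hj
    have h1 : dist (l.getD i x₀) (l.getD (j+1) x₀) ≤
        max (dist (l.getD i x₀) (l.getD j x₀)) (dist (l.getD j x₀) (l.getD (j+1) x₀)) :=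
      hultra _ _ _
    refine h1.trans (max_le ?_ ?_)
    · exact (ih hj').trans (chainSup_mono _ (Nat.lt_of_succ_le hij) (Finset.Ioc_subset_Ioc le_rfl (Nat.le_succ j)))
    · have : dist (l.getD j x₀) (l.getD (j+1) x₀)
          = (fun k => dist (l.getD (k-1) x₀) (l.getD k x₀)) (j+1) := by simp
      rw [this]
      exact le_chainSup (fun k => dist (l.getD (k-1) x₀) (l.getD k x₀)) (Finset.mem_Ioc.2 ⟨Nat.lt_succ_of_le (Nat.le_of_succ_le hij), le_refl _⟩)


/-- Existence of a "chain ordering" of a finite subset of an ultrametric space: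
consecutive distances along the list bound all distances between enclosing indices. -/
lemma exists_chain {X : Type*} [MetricSpace X] [DecidableEq X]
    (hultra : ∀ x y z : X, dist x y ≤ max (dist x z) (dist z y)) (x₀ : X) :
    ∀ s : Finset X, s.Nonempty → ∃ l : List X, l.Nodup ∧ l.toFinset = s ∧
      ∀ i k j : ℕ, i < k → k ≤ j → j < l.length →
        dist (l.getD (k-1) x₀) (l.getD k x₀) ≤ dist (l.getD i x₀) (l.getD j x₀) := by
  intro s
  induction s using Finset.strongInduction with
  | _ s ih =>
    intro hs
    by_cases hcard : s.card ≤ 1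
    · obtain ⟨x, hx⟩ := Finset.card_eq_one.1 (le_antisymm hcard (Finset.Nonempty.card_pos hs))
      refine ⟨[x], by simp, by simp [hx], ?_⟩
      intro i k j hik hkj hj
      simp only [List.length_singleton] at hj
      omega
    · push_neg at hcard
      -- diameter
      have hne : (s ×ˢ s).Nonempty := hs.product hs
      set m : ℝ := (s ×ˢ s).sup' hne (fun p => dist p.1 p.2) with hm
      have hle : ∀ u ∈ s, ∀ v ∈ s, dist u v ≤ m := by
        intro u hu v hv
        have huv : ((u, v) : X × X) ∈ s ×ˢ s := Finset.mem_product.2 ⟨hu, hv⟩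
        exact Finset.le_sup' (fun p => dist p.1 p.2) huv
      obtain ⟨p, hp, hpm⟩ := Finset.exists_mem_eq_sup' hne (fun p => dist p.1 p.2)
      obtain ⟨hp1, hp2⟩ := Finset.mem_product.1 hp
      have hmpos : 0 < m := by
        obtain ⟨u, hu, v, hv, huv⟩ := Finset.one_lt_card.1 hcard
        exact lt_of_lt_of_le (dist_pos.2 huv) (hle u hu v hv)
      set x0 := p.1
      set A : Finset X := s.filter (fun y => dist x0 y < m) with hA
      set B : Finset X := s \ A with hB
      have hx0A : x0 ∈ A := Finset.mem_filter.2 ⟨hp1, by simpa using hmpos⟩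
      have hy0B : p.2 ∈ B := by
        refine Finset.mem_sdiff.2 ⟨hp2, ?_⟩
        simp only [hA, Finset.mem_filter]
        rintro ⟨-, h⟩
        rw [← hpm] at h
        exact lt_irrefl _ h
      have hAs : A ⊆ s := Finset.filter_subset _ s
      have hAss : A ⊂ s := ⟨hAs, fun h => (Finset.mem_sdiff.1 hy0B).2 (h hp2)⟩
      have hBss : B ⊂ s := ⟨Finset.sdiff_subset, fun h =>
        (Finset.mem_sdiff.1 (h (hAs hx0A))).2 hx0A⟩
      -- distances across the split are exactly m
      have hcross : ∀ a ∈ A, ∀ b ∈ B, dist a b = m := by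
        intro a ha b hb
        obtain ⟨has, haxm⟩ := Finset.mem_filter.1 ha
        obtain ⟨hbs, hbA⟩ := Finset.mem_sdiff.1 hb
        have hx0b : dist x0 b = m := by
          have h1 : dist x0 b ≤ m := hle _ hp1 _ hbs
          have h2 : ¬ dist x0 b < m := by
            intro h
            exact hbA (Finset.mem_filter.2 ⟨hbs, h⟩)
          exact h1.lt_or_eq.resolve_left h2
        have h3 : dist x0 b ≤ max (dist x0 a) (dist a b) := hultra _ _ _
        have h4 : dist a b ≤ m := hle _ has _ hbs
        rw [hx0b] at h3
        rcases max_cases (dist x0 a) (dist a b) with ⟨heq, -⟩ | ⟨heq, -⟩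
        · rw [heq] at h3; linarith
        · rw [heq] at h3; linarith
      obtain ⟨lA, hndA, htfA, hcA⟩ := ih A hAss ⟨x0, hx0A⟩
      obtain ⟨lB, hndB, htfB, hcB⟩ := ih B hBss ⟨p.2, hy0B⟩
      have hdisj : ∀ x ∈ lA, x ∉ lB := by
        intro x hx hx'
        have h1 : x ∈ A := htfA ▸ List.mem_toFinset.2 hx
        have h2 : x ∈ B := htfB ▸ List.mem_toFinset.2 hx'
        exact (Finset.mem_sdiff.1 h2).2 h1
      refine ⟨lA ++ lB, List.Nodup.append hndA hndB hdisj, ?_, ?_⟩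
      · rw [List.toFinset_append, htfA, htfB]
        exact Finset.union_sdiff_of_subset hAs
      · intro i k j hik hkj hj
        rw [List.length_append] at hj
        set LA := lA.length with hLA
        -- membership facts
        have hmemA : ∀ t, t < LA → (lA ++ lB).getD t x₀ ∈ A := by
          intro t ht
          rw [List.getD_append _ _ _ _ ht, List.getD_eq_getElem _ _ ht]
          exact htfA ▸ List.mem_toFinset.2 (List.getElem_mem ht)
        have hmemB : ∀ t, LA ≤ t → t < LA + lB.length → (lA ++ lB).getD t x₀ ∈ B := by
          intro t ht ht2
          rw [List.getD_append_right _ _ _ _ ht]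
          have h3 : t - LA < lB.length := by omega
          rw [List.getD_eq_getElem _ _ h3]
          exact htfB ▸ List.mem_toFinset.2 (List.getElem_mem h3)
        have hmemS : ∀ t, t < LA + lB.length → (lA ++ lB).getD t x₀ ∈ s := by
          intro t ht
          rcases lt_or_ge t LA with h | h
          · exact hAs (hmemA t h)
          · exact Finset.sdiff_subset (hmemB t h ht)
        rcases lt_or_ge j LA with hjA | hjB
        · -- all inside lA
          have e1 : (lA ++ lB).getD i x₀ = lA.getD i x₀ := List.getD_append _ _ _ _ (by omega)
          have e2 : (lA ++ lB).getD j x₀ = lA.getD j x₀ := List.getD_append _ _ _ _ hjA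
          have e3 : (lA ++ lB).getD k x₀ = lA.getD k x₀ := List.getD_append _ _ _ _ (by omega)
          have e4 : (lA ++ lB).getD (k-1) x₀ = lA.getD (k-1) x₀ := List.getD_append _ _ _ _ (by omega)
          rw [e1, e2, e3, e4]
          exact hcA i k j hik hkj hjA
        · rcases lt_or_ge i LA with hiA | hiB
          · -- cross case: distance between endpoints is m
            have hcr : dist ((lA ++ lB).getD i x₀) ((lA ++ lB).getD j x₀) = m :=
              hcross _ (hmemA i hiA) _ (hmemB j hjB hj)
            rw [hcr]
            have hk1 : k - 1 < LA + lB.length := by omega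
            have hk2 : k < LA + lB.length := by omega
            exact hle _ (hmemS _ hk1) _ (hmemS _ hk2)
          · -- all inside lB
            have e1 : (lA ++ lB).getD i x₀ = lB.getD (i - LA) x₀ :=
              List.getD_append_right _ _ _ _ hiB
            have e2 : (lA ++ lB).getD j x₀ = lB.getD (j - LA) x₀ :=
              List.getD_append_right _ _ _ _ (by omega)
            have e3 : (lA ++ lB).getD k x₀ = lB.getD (k - LA) x₀ :=
              List.getD_append_right _ _ _ _ (by omega)
            have e4 : (lA ++ lB).getD (k-1) x₀ = lB.getD (k - LA - 1) x₀ := by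
              rw [List.getD_append_right _ _ _ _ (by omega : LA ≤ k - 1)]
              congr 1
              omega
            rw [e1, e2, e3, e4]
            exact hcB (i - LA) (k - LA) (j - LA) (by omega) (by omega) (by omega)


/-- Strong-triangle splitting for `chainSup` with min/max index pairs. -/
lemma chainSup_tri_key (E : ℕ → ℝ) {i j : ℕ} (k : ℕ) (hij : i < j) :
    chainSup E i j ≤
      max (chainSup E (min i k) (max i k)) (chainSup E (min k j) (max k j)) := by
  rcases le_or_gt k i with hki | hik
  · have h1 : min k j = k := min_eq_left (le_trans hki hij.le)
    have h2 : max k j = j := max_eq_right (le_trans hki hij.le)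
    rw [h1, h2]
    exact le_trans (chainSup_mono E hij (Finset.Ioc_subset_Ioc hki le_rfl)) (le_max_right _ _)
  · rcases le_or_gt j k with hjk | hkj
    · have h1 : min i k = i := min_eq_left (le_trans hij.le hjk)
      have h2 : max i k = k := max_eq_right (le_trans hij.le hjk)
      rw [h1, h2]
      exact le_trans (chainSup_mono E hij (Finset.Ioc_subset_Ioc le_rfl hjk)) (le_max_left _ _)
    · have h1 : min i k = i := min_eq_left hik.le
      have h2 : max i k = k := max_eq_right hik.le
      have h3 : min k j = k := min_eq_left hkj.le
      have h4 : max k j = j := max_eq_right hkj.le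
      rw [h1, h2, h3, h4]
      refine chainSup_le E hij ?_
      intro t ht
      obtain ⟨ht1, ht2⟩ := Finset.mem_Ioc.1 ht
      rcases le_or_gt t k with htk | hkt
      · exact le_trans (le_chainSup E (Finset.mem_Ioc.2 ⟨ht1, htk⟩)) (le_max_left _ _)
      · exact le_trans (le_chainSup E (Finset.mem_Ioc.2 ⟨hkt, ht2⟩)) (le_max_right _ _)

lemma chainSup_tri (E : ℕ → ℝ) {i j : ℕ} (k : ℕ) (hij : i ≠ j) :
    chainSup E (min i j) (max i j) ≤
      max (chainSup E (min i k) (max i k)) (chainSup E (min k j) (max k j)) := by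
  rcases lt_or_gt_of_ne hij with h | h
  · rw [min_eq_left h.le, max_eq_right h.le]
    exact chainSup_tri_key E k h
  · rw [min_eq_right h.le, max_eq_left h.le]
    have := chainSup_tri_key E k h
    calc chainSup E j i ≤ max (chainSup E (min j k) (max j k)) (chainSup E (min k i) (max k i)) :=
          this
      _ = max (chainSup E (min i k) (max i k)) (chainSup E (min k j) (max k j)) := by
          rw [max_comm (chainSup E (min j k) (max j k)), min_comm j k, max_comm j k,
            min_comm k i, max_comm k i]

/-- For every finite nonempty ultrametric space `(X,d)` and every
`ε > 0` there is an ultrametric `ρ` on the same set `X` with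
`|Sp(X,ρ)| = |X| − 1` and `|d(x,y) − ρ(x,y)| < ε` for all `x, y ∈ X`. -/
theorem stmt13 {X : Type*} [MetricSpace X] [Fintype X] [Nonempty X]
    (hultra : ∀ x y z : X, dist x y ≤ max (dist x z) (dist z y))
    (ε : ℝ) (hε : 0 < ε) :
    ∃ ρ : X → X → ℝ, IsUltrametric ρ ∧ (specOf ρ).ncard = Fintype.card X - 1 ∧
      ∀ x y : X, |dist x y - ρ x y| < ε := by
  classical
  obtain ⟨x₀⟩ := (inferInstance : Nonempty X)
  set n := Fintype.card X with hn
  have hn1 : 1 ≤ n := Fintype.card_pos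
  obtain ⟨l, hnd, htf, hcons⟩ := exists_chain hultra x₀ Finset.univ Finset.univ_nonempty
  have hmem : ∀ x : X, x ∈ l := by
    intro x; rw [← List.mem_toFinset, htf]; exact Finset.mem_univ x
  have hlen : l.length = n := by
    rw [← List.toFinset_card_of_nodup hnd, htf, Finset.card_univ]
  set idx : X → ℕ := fun x => List.idxOf x l with hidx
  have hidx_lt : ∀ x, idx x < l.length := fun x => List.idxOf_lt_length_iff.2 (hmem x)
  have hidx_getD : ∀ x, l.getD (idx x) x₀ = x := by
    intro x
    rw [List.getD_eq_getElem _ _ (hidx_lt x)]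
    exact List.getElem_idxOf (hidx_lt x)
  have hidx_inj : ∀ x y, idx x = idx y → x = y := by
    intro x y h
    rw [← hidx_getD x, ← hidx_getD y, h]
  have hgetD_idx : ∀ t, t < l.length → idx (l.getD t x₀) = t := by
    intro t ht
    rw [List.getD_eq_getElem _ _ ht]
    exact hnd.idxOf_getElem t ht
  set a : ℕ → ℝ := fun k => dist (l.getD (k-1) x₀) (l.getD k x₀) with ha
  -- choose the perturbation δ
  set S : Finset ℕ := Finset.Ioc 0 (n-1) with hS
  set Bad : Finset ℝ := (S ×ˢ S).image (fun p => (a p.2 - a p.1) / ((p.1 : ℝ) - p.2)) with hBad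
  have hBadne : ((Set.Ioo (0:ℝ) (ε/(n+1))) \ ↑Bad).Nonempty := by
    refine Set.Infinite.nonempty (Set.Infinite.diff ?_ Bad.finite_toSet)
    exact Set.Ioo_infinite (by positivity)
  obtain ⟨δ, hδ⟩ := hBadne
  have hδ0 : 0 < δ := hδ.1.1
  have hδε : δ < ε/(n+1) := hδ.1.2
  have hδBad : δ ∉ (Bad : Set ℝ) := hδ.2
  set E : ℕ → ℝ := fun k => a k + δ * k with hE
  have hEinj : Set.InjOn E ↑S := by
    intro k hk m hm hkm
    by_contra hne
    apply hδBad
    have hkm' : ((k : ℝ) - m) ≠ 0 := by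
      have : (k : ℝ) ≠ (m : ℝ) := by exact_mod_cast hne
      exact sub_ne_zero.2 this
    have hδval : δ = (a m - a k) / ((k : ℝ) - m) := by
      rw [eq_div_iff hkm']
      have : a k + δ * k = a m + δ * m := hkm
      ring_nf
      ring_nf at this
      linarith
    rw [hδval]
    exact Finset.mem_coe.2 (Finset.mem_image.2 ⟨(k, m),
      Finset.mem_product.2 ⟨hk, hm⟩, rfl⟩)
  -- the chain equality for the original distance
  have hda : ∀ i j, i < j → j < l.length →
      dist (l.getD i x₀) (l.getD j x₀) = chainSup a i j := by
    intro i j hij hj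
    refine le_antisymm (chain_le hultra x₀ l hij hj) (chainSup_le a hij ?_)
    intro k hk
    obtain ⟨h1, h2⟩ := Finset.mem_Ioc.1 hk
    exact hcons i k j h1 h2 hj
  set ρ : X → X → ℝ :=
    fun x y => if x = y then 0 else chainSup E (min (idx x) (idx y)) (max (idx x) (idx y))
    with hρ
  have hminmax : ∀ x y, x ≠ y → min (idx x) (idx y) < max (idx x) (idx y) := by
    intro x y h
    exact min_lt_max.2 (fun he => h (hidx_inj x y he))
  have hEpos : ∀ k, 1 ≤ k → 0 < E k := by
    intro k hk
    have h1 : (0:ℝ) ≤ a k := dist_nonneg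
    have h2 : (1:ℝ) ≤ (k:ℝ) := by exact_mod_cast hk
    have : 0 < δ * k := mul_pos hδ0 (by linarith)
    simp only [hE]
    linarith
  have hρpos : ∀ x y, x ≠ y → 0 < ρ x y := by
    intro x y h
    rw [hρ]
    simp only [if_neg h]
    obtain ⟨mm, hmm, heq⟩ := exists_chainSup E (hminmax x y h)
    rw [heq]
    obtain ⟨h1, -⟩ := Finset.mem_Ioc.1 hmm
    exact hEpos mm (by omega)
  have hρnonneg : ∀ x y, 0 ≤ ρ x y := by
    intro x y
    by_cases h : x = y
    · rw [hρ]; simp [h]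
    · exact (hρpos x y h).le
  refine ⟨ρ, ⟨?_, ?_, ?_⟩, ?_, ?_⟩
  · -- vanishing iff diagonal
    intro x y
    constructor
    · intro h0
      by_contra h
      exact absurd h0 (ne_of_gt (hρpos x y h))
    · intro h; rw [hρ]; simp [h]
  · -- symmetry
    intro x y
    by_cases h : x = y
    · rw [h]
    · rw [hρ]
      simp only [if_neg h, if_neg (Ne.symm h)]
      rw [min_comm, max_comm]
  · -- strong triangle inequality
    intro x y z
    by_cases hxy : x = y
    · rw [hxy, hρ]
      simp only [if_pos rfl]
      exact le_max_of_le_left (hρnonneg y z)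
    · by_cases hxz : x = z
      · rw [← hxz]; exact le_max_right _ _
      · by_cases hzy : z = y
        · rw [hzy]; exact le_max_left _ _
        · rw [hρ]
          simp only [if_neg hxy, if_neg hxz, if_neg hzy]
          exact chainSup_tri E (idx z) (fun he => hxy (hidx_inj x y he))
  · -- spectrum cardinality
    have hspec : specOf ρ = ↑(S.image E) := by
      ext r
      constructor
      · rintro ⟨x, y, hxy, rfl⟩
        rw [hρ]
        simp only [if_neg hxy]
        obtain ⟨mm, hmm, heq⟩ := exists_chainSup E (hminmax x y hxy)
        rw [heq]
        refine Finset.mem_coe.2 (Finset.mem_image.2 ⟨mm, ?_, rfl⟩)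
        obtain ⟨h1, h2⟩ := Finset.mem_Ioc.1 hmm
        have h3 : max (idx x) (idx y) < l.length := max_lt (hidx_lt x) (hidx_lt y)
        rw [hS]
        refine Finset.mem_Ioc.2 ⟨by omega, by omega⟩
      · intro hr
        obtain ⟨mm, hmmS, rfl⟩ := Finset.mem_image.1 (Finset.mem_coe.1 hr)
        obtain ⟨h1, h2⟩ := Finset.mem_Ioc.1 (hS ▸ hmmS)
        have hmm_lt : mm < l.length := by omega
        have hm1_lt : mm - 1 < l.length := by omega
        refine ⟨l.getD (mm-1) x₀, l.getD mm x₀, ?_, ?_⟩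
        · intro h
          have e1 := hgetD_idx _ hm1_lt
          have e2 := hgetD_idx _ hmm_lt
          rw [h, e2] at e1
          omega
        · have hne : l.getD (mm-1) x₀ ≠ l.getD mm x₀ := by
            intro h
            have e1 := hgetD_idx _ hm1_lt
            have e2 := hgetD_idx _ hmm_lt
            rw [h, e2] at e1
            omega
          rw [hρ]
          simp only [if_neg hne]
          rw [hgetD_idx _ hm1_lt, hgetD_idx _ hmm_lt]
          have hmin : min (mm-1) mm = mm - 1 := min_eq_left (by omega)
          have hmax : max (mm-1) mm = mm := max_eq_right (by omega)
          have hIoc : Finset.Ioc (mm-1) mm = {mm} := by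
            ext t
            simp only [Finset.mem_Ioc, Finset.mem_singleton]
            omega
          rw [hmin, hmax, chainSup_eq E (by omega : mm - 1 < mm)]
          simp only [hIoc]
          rw [Finset.sup'_singleton]
    rw [hspec, Set.ncard_coe_finset, Finset.card_image_of_injOn hEinj, hS, Nat.card_Ioc]
    omega
  · -- approximation
    intro x y
    by_cases h : x = y
    · rw [hρ]
      simp [h, hε]
    · rw [hρ]
      simp only [if_neg h]
      set i := min (idx x) (idx y) with hi
      set j := max (idx x) (idx y) with hj
      have hij : i < j := hminmax x y h
      have hjlt : j < l.length := max_lt (hidx_lt x) (hidx_lt y)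
      have hdxy : dist x y = chainSup a i j := by
        rcases le_total (idx x) (idx y) with hle | hle
        · have e1 : i = idx x := min_eq_left hle
          have e2 : j = idx y := max_eq_right hle
          calc dist x y = dist (l.getD (idx x) x₀) (l.getD (idx y) x₀) := by
                rw [hidx_getD, hidx_getD]
            _ = chainSup a (idx x) (idx y) :=
                hda _ _ (by rw [← e1, ← e2]; exact hij) (by rw [← e2]; exact hjlt)
            _ = chainSup a i j := by rw [← e1, ← e2]
        · have e1 : i = idx y := min_eq_right hle
          have e2 : j = idx x := max_eq_left hle
          calc dist x y = dist (l.getD (idx y) x₀) (l.getD (idx x) x₀) := by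
                rw [hidx_getD, hidx_getD, dist_comm]
            _ = chainSup a (idx y) (idx x) :=
                hda _ _ (by rw [← e1, ← e2]; exact hij) (by rw [← e2]; exact hjlt)
            _ = chainSup a i j := by rw [← e1, ← e2]
      have h1 : chainSup a i j ≤ chainSup E i j := by
        rw [chainSup_eq a hij, chainSup_eq E hij]
        refine Finset.sup'_mono_fun ?_
        intro k hk
        have : (0:ℝ) ≤ δ * k := mul_nonneg hδ0.le (Nat.cast_nonneg k)
        simp only [hE]
        linarith
      have h2 : chainSup E i j ≤ chainSup a i j + δ * n := by
        obtain ⟨mm, hmm, heq⟩ := exists_chainSup E hij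
        rw [heq]
        obtain ⟨hm1, hm2⟩ := Finset.mem_Ioc.1 hmm
        have ha1 : a mm ≤ chainSup a i j := le_chainSup a hmm
        have hmn : (mm : ℝ) ≤ (n : ℝ) := by
          have : mm < n := by omega
          exact_mod_cast this.le
        have : δ * mm ≤ δ * n := mul_le_mul_of_nonneg_left hmn hδ0.le
        simp only [hE]
        linarith
      have hδn : δ * n < ε := by
        have hpos : (0:ℝ) < (n:ℝ) + 1 := by positivity
        have h3 : δ * ((n:ℝ) + 1) < ε := by
          rw [div_eq_mul_inv] at hδε
          calc δ * ((n:ℝ)+1) < (ε * ((n:ℝ)+1)⁻¹) * ((n:ℝ)+1) := by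
                exact mul_lt_mul_of_pos_right hδε hpos
            _ = ε := by field_simp
        nlinarith
      rw [hdxy, abs_lt]
      constructor <;> linarith
end

section
/- Let (X,d) be a finite nonempty ultrametric space and let ε > 0. Then there exists a finite nonempty ultrametric space (Y,ρ) with |Y| = |X|, |Sp(Y)| = |Y| − 1, and Gromov–Hausdorff distance d_GH(X,Y) < ε. -/
open Finset
lemma chain_aux {X : Type*} [MetricSpace X] [DecidableEq X]
    (hultra : ∀ x y z : X, dist x y ≤ max (dist x z) (dist z y)) (x₀ : X) :
    ∀ n : ℕ, ∀ s : Finset X, s.Nonempty → s.card ≤ n →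
    ∃ l : List X, l.Nodup ∧ l.toFinset = s ∧
      ∀ i j : ℕ, ∀ hij : i < j, j < l.length →
        dist (l.getD i x₀) (l.getD j x₀) =
          (Finset.Ico i j).sup' (Finset.nonempty_Ico.2 hij)
            (fun k => dist (l.getD k x₀) (l.getD (k+1) x₀)) := by
  intro n
  induction n with
  | zero => intro s hs hc; have := hs.card_pos; omega
  | succ n IH =>
    intro s hs hc
    by_cases h1 : s.card = 1
    · obtain ⟨a, rfl⟩ := Finset.card_eq_one.mp h1
      refine ⟨[a], List.nodup_singleton a, by simp, ?_⟩
      intro i j hij hj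
      simp only [List.length_singleton] at hj
      omega
    · have h2 : 2 ≤ s.card := by have := hs.card_pos; omega
      set f : X → ℝ := fun x => s.sup' hs (fun y => dist x y) with hf
      set D := s.sup' hs f with hDdef
      obtain ⟨a, ha, hfa⟩ := Finset.exists_mem_eq_sup' hs f
      obtain ⟨b, hb, hfb⟩ := Finset.exists_mem_eq_sup' hs (fun y => dist a y)
      have hab : dist a b = D := by rw [hDdef, hfa, hf]; exact hfb.symm
      have hle : ∀ x ∈ s, ∀ y ∈ s, dist x y ≤ D := fun x hx y hy =>
        le_trans (Finset.le_sup' (fun y => dist x y) hy) (Finset.le_sup' f hx)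
      have hD : 0 < D := by
        obtain ⟨u, hu, v, hv, huv⟩ := Finset.one_lt_card.mp h2
        have h3 := hle u hu v hv
        have h4 := dist_pos.2 huv
        linarith
      classical
      set C := s.filter (fun z => dist a z < D) with hCdef
      have haC : a ∈ C := Finset.mem_filter.2 ⟨ha, by simpa using hD⟩
      have hbC : b ∈ s \ C := by
        refine Finset.mem_sdiff.2 ⟨hb, fun hmem => ?_⟩
        have := (Finset.mem_filter.mp hmem).2
        rw [hab] at this
        exact lt_irrefl _ this
      have hCs : C ⊆ s := Finset.filter_subset _ _
      have cross : ∀ x ∈ C, ∀ y ∈ s \ C, dist x y = D := by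
        intro x hx y hy
        obtain ⟨hys, hyC⟩ := Finset.mem_sdiff.mp hy
        have hxs := hCs hx
        have hax : dist a x < D := (Finset.mem_filter.mp hx).2
        have hay : ¬ dist a y < D := fun h => hyC (Finset.mem_filter.2 ⟨hys, h⟩)
        refine le_antisymm (hle x hxs y hys) ?_
        by_contra h
        push_neg at h
        exact hay (lt_of_le_of_lt (hultra a y x) (max_lt hax (by simpa [dist_comm] using h)))
      have hC1 : C.card < s.card :=
        Finset.card_lt_card ⟨hCs, fun hsub => (Finset.mem_sdiff.mp hbC).2 (hsub hb)⟩
      have hC2 : (s \ C).card < s.card :=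
        Finset.card_lt_card ⟨Finset.sdiff_subset,
          fun hsub => (Finset.mem_sdiff.mp (hsub ha)).2 haC⟩
      obtain ⟨l₁, hn₁, ht₁, hk₁⟩ := IH C ⟨a, haC⟩ (by omega)
      obtain ⟨l₂, hn₂, ht₂, hk₂⟩ := IH (s \ C) ⟨b, hbC⟩ (by omega)
      have hdisj : l₁.Disjoint l₂ := by
        intro x hx1 hx2
        have hx1' : x ∈ C := ht₁ ▸ List.mem_toFinset.2 hx1
        have hx2' : x ∈ s \ C := ht₂ ▸ List.mem_toFinset.2 hx2
        exact (Finset.mem_sdiff.mp hx2').2 hx1'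
      set m := l₁.length with hm
      have hm1 : 1 ≤ m := by
        rcases l₁ with _ | ⟨y, l⟩
        · exfalso; rw [List.toFinset_nil] at ht₁; exact absurd ht₁.symm (Finset.ne_empty_of_mem haC)
        · simp [hm]
      have hmemC : ∀ k, k < m → l₁.getD k x₀ ∈ C := by
        intro k hk
        rw [List.getD_eq_getElem _ _ hk, ← ht₁]
        exact List.mem_toFinset.2 (List.getElem_mem hk)
      have hmemS : ∀ k, k < l₂.length → l₂.getD k x₀ ∈ s \ C := by
        intro k hk
        rw [List.getD_eq_getElem _ _ hk, ← ht₂]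
        exact List.mem_toFinset.2 (List.getElem_mem hk)
      have hlen : (l₁ ++ l₂).length = m + l₂.length := List.length_append
      have hmem : ∀ k, k < (l₁ ++ l₂).length → (l₁ ++ l₂).getD k x₀ ∈ s := by
        intro k hk
        rcases lt_or_ge k m with h | h
        · rw [List.getD_append _ _ _ _ h]; exact hCs (hmemC k h)
        · rw [List.getD_append_right _ _ _ _ h]
          exact Finset.mem_sdiff.mp (hmemS (k - m) (by omega)) |>.1
      refine ⟨l₁ ++ l₂, ?_, ?_, ?_⟩
      · exact List.nodup_append.2 ⟨hn₁, hn₂, fun a ha b hb hab => hdisj ha (hab ▸ hb : a ∈ l₂)⟩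
      · rw [List.toFinset_append, ht₁, ht₂]; exact Finset.union_sdiff_of_subset hCs
      · intro i j hij hj
        rw [hlen] at hj
        rcases lt_or_ge j m with hjm | hjm
        · -- both in l₁
          have him : i < m := lt_trans hij hjm
          rw [List.getD_append _ _ _ _ him, List.getD_append _ _ _ _ hjm, hk₁ i j hij hjm]
          refine Finset.sup'_congr _ rfl ?_
          intro k hk
          obtain ⟨hik, hkj⟩ := Finset.mem_Ico.mp hk
          rw [List.getD_append _ _ _ _ (by omega), List.getD_append _ _ _ _ (by omega)]
        · rcases le_or_gt m i with him | him
          · -- both in l₂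
            have hij2 : i - m < j - m := by omega
            have hjm2 : j - m < l₂.length := by omega
            rw [List.getD_append_right _ _ _ _ him, List.getD_append_right _ _ _ _ hjm,
              hk₂ (i - m) (j - m) hij2 hjm2]
            have hmap : Finset.Ico i j = (Finset.Ico (i - m) (j - m)).map (addRightEmbedding m) := by
              rw [Finset.map_add_right_Ico, Nat.sub_add_cancel him, Nat.sub_add_cancel (by omega)]
            rw [show ((Finset.Ico i j).sup' (Finset.nonempty_Ico.2 hij)
                (fun k => dist ((l₁ ++ l₂).getD k x₀) ((l₁ ++ l₂).getD (k+1) x₀)))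
              = ((Finset.Ico (i-m) (j-m)).map (addRightEmbedding m)).sup'
                (hmap ▸ Finset.nonempty_Ico.2 hij)
                (fun k => dist ((l₁ ++ l₂).getD k x₀) ((l₁ ++ l₂).getD (k+1) x₀)) from by
                  congr 1]
            rw [Finset.sup'_map]
            refine Finset.sup'_congr _ rfl ?_
            intro k hk
            obtain ⟨hik, hkj⟩ := Finset.mem_Ico.mp hk
            simp only [Function.comp_apply, addRightEmbedding_apply]
            rw [List.getD_append_right _ _ _ _ (by omega : m ≤ k + m),
              List.getD_append_right _ _ _ _ (by omega : m ≤ k + m + 1)]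
            congr 2 <;> omega
          · -- cross case
            have hj2 : j - m < l₂.length := by omega
            have hx : (l₁ ++ l₂).getD i x₀ ∈ C := by
              rw [List.getD_append _ _ _ _ him]; exact hmemC i him
            have hy : (l₁ ++ l₂).getD j x₀ ∈ s \ C := by
              rw [List.getD_append_right _ _ _ _ hjm]; exact hmemS (j - m) hj2
            rw [cross _ hx _ hy]
            refine le_antisymm ?_ ?_
            · -- D ≤ sup' via index m - 1
              have hmem1 : m - 1 ∈ Finset.Ico i j := Finset.mem_Ico.2 ⟨by omega, by omega⟩
              refine Finset.le_sup'_of_le _ hmem1 ?_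
              have e1 : (l₁ ++ l₂).getD (m - 1) x₀ ∈ C := by
                rw [List.getD_append _ _ _ _ (by omega)]; exact hmemC (m - 1) (by omega)
              have e2 : (l₁ ++ l₂).getD (m - 1 + 1) x₀ ∈ s \ C := by
                rw [show m - 1 + 1 = m by omega, List.getD_append_right _ _ _ _ le_rfl]
                exact hmemS (m - m) (by omega)
              rw [cross _ e1 _ e2]
            · refine Finset.sup'_le _ _ ?_
              intro k hk
              obtain ⟨hik, hkj⟩ := Finset.mem_Ico.mp hk
              exact hle _ (hmem k (by omega)) _ (hmem (k+1) (by omega))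
lemma sup'_Ico_split (w : ℕ → ℝ) {i j k : ℕ} (hik : i < k) (hkj : k < j) :
    (Finset.Ico i j).sup' (Finset.nonempty_Ico.2 (hik.trans hkj)) w ≤
      max ((Finset.Ico i k).sup' (Finset.nonempty_Ico.2 hik) w)
          ((Finset.Ico k j).sup' (Finset.nonempty_Ico.2 hkj) w) := by
  refine Finset.sup'_le _ _ fun m hm => ?_
  obtain ⟨h1, h2⟩ := Finset.mem_Ico.mp hm
  rcases lt_or_ge m k with h | h
  · exact le_max_of_le_left (Finset.le_sup' w (Finset.mem_Ico.2 ⟨h1, h⟩))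
  · exact le_max_of_le_right (Finset.le_sup' w (Finset.mem_Ico.2 ⟨h, h2⟩))

lemma sup'_Ico_mono (w : ℕ → ℝ) {i i' j j' : ℕ} (h1 : i' ≤ i) (h2 : j ≤ j') (hij : i < j) :
    (Finset.Ico i j).sup' (Finset.nonempty_Ico.2 hij) w ≤
      (Finset.Ico i' j').sup' (Finset.nonempty_Ico.2 (by omega)) w :=
  Finset.sup'_le _ _ fun m hm => Finset.le_sup' w
    (Finset.mem_Ico.2 (by have := Finset.mem_Ico.mp hm; omega))


set_option maxHeartbeats 2000000 in
/-- For every finite nonempty ultrametric space `(X,d)` and every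
`ε > 0` there is a finite nonempty ultrametric space `(Y,ρ)` with `|Y| = |X|`,
`|Sp(Y)| = |Y| − 1`, and Gromov–Hausdorff distance `d_GH(X,Y) < ε`. -/
theorem stmt14 {X : Type u} [MetricSpace X] [Fintype X] [Nonempty X]
    (hultra : ∀ x y z : X, dist x y ≤ max (dist x z) (dist z y))
    (ε : ℝ) (hε : 0 < ε) :
    ∃ (Y : Type) (_ : MetricSpace Y) (_ : Fintype Y) (_ : Nonempty Y),
      (∀ x y z : Y, dist x y ≤ max (dist x z) (dist z y)) ∧
      Fintype.card Y = Fintype.card X ∧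
      ({r : ℝ | ∃ x y : Y, x ≠ y ∧ dist x y = r}).ncard = Fintype.card Y - 1 ∧
      GromovHausdorff.ghDist X Y < ε := by
  classical
  obtain ⟨x₀⟩ := ‹Nonempty X›
  obtain ⟨l, hnd, htf, hchain⟩ := chain_aux hultra x₀ (Fintype.card X) Finset.univ
    ⟨x₀, Finset.mem_univ _⟩ (by simp)
  set n := l.length with hn
  have hcard : n = Fintype.card X := by
    rw [hn, ← List.toFinset_card_of_nodup hnd, htf, Finset.card_univ]
  have hn1 : 1 ≤ n := by rw [hcard]; exact Fintype.card_pos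
  set w : ℕ → ℝ := fun k => dist (l.getD k x₀) (l.getD (k+1) x₀) with hw
  have hwnonneg : ∀ k, 0 ≤ w k := fun k => dist_nonneg
  -- the minimal gap γ
  set P := (Finset.range n ×ˢ Finset.range n).filter (fun p => w p.1 < w p.2) with hP
  set γ : ℝ := if hne : P.Nonempty then P.inf' hne (fun p => w p.2 - w p.1) else 1 with hγ
  have hγpos : 0 < γ := by
    rw [hγ]; split_ifs with hne
    · rw [Finset.lt_inf'_iff]
      intro p hp
      have := (Finset.mem_filter.mp hp).2
      linarith
    · norm_num
  have hγle : ∀ k k', k < n → k' < n → w k < w k' → γ ≤ w k' - w k := by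
    intro k k' hk hk' hlt
    have hmem : (k, k') ∈ P := Finset.mem_filter.2
      ⟨Finset.mem_product.2 ⟨Finset.mem_range.2 hk, Finset.mem_range.2 hk'⟩, hlt⟩
    rw [hγ, dif_pos ⟨_, hmem⟩]
    exact Finset.inf'_le _ hmem
  set η : ℝ := min γ ε / (2 * n + 2) with hη
  have hηpos : 0 < η := by
    rw [hη]; apply div_pos (lt_min hγpos hε); positivity
  have hηn1 : η * ((n : ℝ) + 1) = min γ ε / 2 := by
    rw [hη]; field_simp
  have hηn : η * n ≤ min γ ε / 2 := by nlinarith [hηpos.le]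
  have hηγ : η * n < γ := by
    have : min γ ε ≤ γ := min_le_left _ _
    linarith
  have hηε : η * n ≤ ε / 2 := by
    have : min γ ε ≤ ε := min_le_right _ _
    linarith
  set w' : ℕ → ℝ := fun k => w k + η * (k + 1) with hw'
  have hw'pos : ∀ k, 0 < w' k := by
    intro k
    have := hwnonneg k
    have : (0:ℝ) < η * (k+1) := by positivity
    simp only [hw']
    nlinarith [hwnonneg k]
  have hinj : ∀ k k', k < n → k' < n → w' k = w' k' → k = k' := by
    intro k k' hk hk' heq
    simp only [hw'] at heq
    by_contra hne
    rcases lt_trichotomy (w k) (w k') with h | h | h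
    · have h1 := hγle k k' hk hk' h
      have h2 : ((k:ℝ) - k') ≤ n := by
        have : (k:ℝ) ≤ n := by exact_mod_cast hk.le
        have : (0:ℝ) ≤ k' := Nat.cast_nonneg _
        linarith
      nlinarith
    · have : ((k:ℝ) + 1) = ((k':ℝ) + 1) := by
        have := heq
        nlinarith
      have : (k:ℝ) = k' := by linarith
      exact hne (by exact_mod_cast this)
    · have h1 := hγle k' k hk' hk h
      have h2 : ((k':ℝ) - k) ≤ n := by
        have : (k':ℝ) ≤ n := by exact_mod_cast hk'.le
        have : (0:ℝ) ≤ (k:ℝ) := Nat.cast_nonneg _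
        linarith
      nlinarith
  -- the perturbed metric on Fin n
  set ρ : Fin n → Fin n → ℝ := fun p q =>
    if h : min (p : ℕ) (q : ℕ) < max (p : ℕ) (q : ℕ) then
      (Finset.Ico (min (p : ℕ) (q : ℕ)) (max (p : ℕ) (q : ℕ))).sup'
        (Finset.nonempty_Ico.2 h) w'
    else 0 with hρ
  have hρeq : ∀ p q : Fin n, ∀ h : (p : ℕ) < (q : ℕ),
      ρ p q = (Finset.Ico (p : ℕ) (q : ℕ)).sup' (Finset.nonempty_Ico.2 h) w' := by
    intro p q h
    simp only [hρ, min_eq_left h.le, max_eq_right h.le]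
    rw [dif_pos h]
  have hρself : ∀ p : Fin n, ρ p p = 0 := by
    intro p; simp [hρ]
  have hρcomm : ∀ p q : Fin n, ρ p q = ρ q p := by
    intro p q; simp only [hρ, min_comm, max_comm]
  have hρpos : ∀ p q : Fin n, p ≠ q → 0 < ρ p q := by
    intro p q hne
    have hv : (p : ℕ) ≠ (q : ℕ) := fun h => hne (Fin.eq_of_val_eq h)
    have h : min (p : ℕ) (q : ℕ) < max (p : ℕ) (q : ℕ) := by omega
    rw [hρ]
    simp only
    rw [dif_pos h]
    exact lt_of_lt_of_le (hw'pos _)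
      (Finset.le_sup' w' (Finset.mem_Ico.2 ⟨le_refl _, h⟩))
  have hρnonneg : ∀ p q : Fin n, 0 ≤ ρ p q := by
    intro p q
    by_cases hpq : p = q
    · rw [hpq, hρself]
    · exact (hρpos p q hpq).le
  -- ultrametric inequality
  have hkey' : ∀ a b r : Fin n, (a : ℕ) < (b : ℕ) → ρ a b ≤ max (ρ a r) (ρ r b) := by
    intro a b r hab
    rcases lt_trichotomy ((r : ℕ)) ((a : ℕ)) with h | h | h
    · -- r < a : ρ r b contains Ico a b
      refine le_max_of_le_right ?_
      rw [hρeq a b hab, hρeq r b (h.trans hab)]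
      exact sup'_Ico_mono w' h.le le_rfl hab
    · -- r = a
      have : r = a := Fin.eq_of_val_eq h
      subst this
      exact le_max_of_le_right (le_of_eq (by rw [hρeq r b hab]))
    · rcases lt_trichotomy ((r : ℕ)) ((b : ℕ)) with h2 | h2 | h2
      · -- a < r < b : split
        rw [hρeq a b hab, hρeq a r h, hρeq r b h2]
        exact sup'_Ico_split w' h h2
      · have : r = b := Fin.eq_of_val_eq h2
        subst this
        exact le_max_of_le_left (le_of_eq (by rw [hρeq a r hab]))
      · -- b < r : ρ a r contains Ico a b
        refine le_max_of_le_left ?_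
        rw [hρeq a b hab, hρeq a r (hab.trans h2)]
        exact sup'_Ico_mono w' le_rfl h2.le hab
  have hkey : ∀ p q r : Fin n, ρ p q ≤ max (ρ p r) (ρ r q) := by
    intro p q r
    rcases lt_trichotomy ((p : ℕ)) ((q : ℕ)) with h | h | h
    · exact hkey' p q r h
    · rw [Fin.eq_of_val_eq h, hρself]
      exact le_max_of_le_left (hρnonneg _ _)
    · rw [hρcomm p q]
      refine le_trans (hkey' q p r h) ?_
      rw [hρcomm q r, hρcomm r p, max_comm]
  letI instY : MetricSpace (Fin n) :=
    { dist := ρ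
      dist_self := hρself
      dist_comm := hρcomm
      dist_triangle := by
        intro p r q
        refine le_trans (hkey p q r) ?_
        exact max_le (le_add_of_nonneg_right (hρnonneg _ _))
          (le_add_of_nonneg_left (hρnonneg _ _))
      eq_of_dist_eq_zero := by
        intro p q h
        by_contra hne
        exact absurd h (ne_of_gt (hρpos p q hne)) }
  haveI hNE : Nonempty (Fin n) := ⟨⟨0, by omega⟩⟩
  -- spectrum
  have hattain : ∀ p q : Fin n, p ≠ q → ∃ k, k < n - 1 ∧ ρ p q = w' k := by
    intro p q hne
    have hv : (p : ℕ) ≠ (q : ℕ) := fun h => hne (Fin.eq_of_val_eq h)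
    have key : ∀ a b : Fin n, (a : ℕ) < (b : ℕ) → ∃ k, k < n - 1 ∧ ρ a b = w' k := by
      intro a b h
      rw [hρeq a b h]
      obtain ⟨k, hk, heq⟩ := Finset.exists_mem_eq_sup' (Finset.nonempty_Ico.2 h) w'
      obtain ⟨hk1, hk2⟩ := Finset.mem_Ico.mp hk
      exact ⟨k, by have := b.isLt; omega, heq⟩
    rcases lt_or_gt_of_ne hv with h | h
    · exact key p q h
    · obtain ⟨k, hk, heq⟩ := key q p h
      exact ⟨k, hk, (hρcomm p q).trans heq⟩
  have hsingle : ∀ k, k < n - 1 → ∃ p q : Fin n, p ≠ q ∧ ρ p q = w' k := by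
    intro k hk
    refine ⟨⟨k, by omega⟩, ⟨k + 1, by omega⟩, ?_, ?_⟩
    · intro h
      have := Fin.val_eq_of_eq h
      simp at this
    · rw [hρeq _ _ (by simp)]
      simp [Nat.Ico_succ_singleton]
  have hspec : {r : ℝ | ∃ p q : Fin n, p ≠ q ∧ dist p q = r}
      = ↑((Finset.range (n - 1)).image w') := by
    ext r
    simp only [Set.mem_setOf_eq, Finset.coe_image, Set.mem_image, Finset.mem_coe,
      Finset.mem_range]
    constructor
    · rintro ⟨p, q, hne, rfl⟩
      obtain ⟨k, hk, heq⟩ := hattain p q hne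
      exact ⟨k, hk, heq.symm⟩
    · rintro ⟨k, hk, rfl⟩
      obtain ⟨p, q, hne, heq⟩ := hsingle k hk
      exact ⟨p, q, hne, heq⟩
  have hncard : ({r : ℝ | ∃ p q : Fin n, p ≠ q ∧ dist p q = r}).ncard = n - 1 := by
    rw [hspec, Set.ncard_coe_finset, Finset.card_image_of_injOn, Finset.card_range]
    intro k hk k' hk' heq
    simp only [Finset.coe_range, Set.mem_Iio] at hk hk'
    exact hinj k k' (by omega) (by omega) heq
  -- GH distance
  set Φ : Fin n → X := fun p => l.getD (p : ℕ) x₀ with hΦ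
  have hΦsurj : Function.Surjective Φ := by
    intro x
    have : x ∈ l.toFinset := htf ▸ Finset.mem_univ x
    obtain ⟨k, hk, heq⟩ := List.mem_iff_getElem.mp (List.mem_toFinset.mp this)
    exact ⟨⟨k, hk⟩, by rw [hΦ]; simp only; rw [List.getD_eq_getElem _ _ hk]; exact heq⟩
  have hdistX : ∀ p q : Fin n, ∀ h : (p : ℕ) < (q : ℕ),
      dist (Φ p) (Φ q) = (Finset.Ico (p : ℕ) (q : ℕ)).sup' (Finset.nonempty_Ico.2 h) w :=
    fun p q h => hchain _ _ h q.isLt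
  have hdiff : ∀ p q : Fin n, ∀ h : (p : ℕ) < (q : ℕ),
      |dist (Φ p) (Φ q) - ρ p q| ≤ ε := by
    intro p q h
    rw [hdistX p q h, hρeq p q h]
    have h1 : (Finset.Ico (p : ℕ) (q : ℕ)).sup' (Finset.nonempty_Ico.2 h) w ≤
        (Finset.Ico (p : ℕ) (q : ℕ)).sup' (Finset.nonempty_Ico.2 h) w' := by
      refine Finset.sup'_le _ _ fun k hk => ?_
      refine le_trans ?_ (Finset.le_sup' w' hk)
      simp only [hw']
      nlinarith [hηpos.le, Nat.cast_nonneg (α := ℝ) k]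
    have h2 : (Finset.Ico (p : ℕ) (q : ℕ)).sup' (Finset.nonempty_Ico.2 h) w' ≤
        (Finset.Ico (p : ℕ) (q : ℕ)).sup' (Finset.nonempty_Ico.2 h) w + η * n := by
      refine Finset.sup'_le _ _ fun k hk => ?_
      obtain ⟨hk1, hk2⟩ := Finset.mem_Ico.mp hk
      have hkn : k + 1 ≤ n := by have := q.isLt; omega
      have hc : ((k : ℝ) + 1) ≤ n := by exact_mod_cast hkn
      have : η * ((k:ℝ) + 1) ≤ η * n := by nlinarith [hηpos.le]
      have hle := Finset.le_sup' w hk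
      simp only [hw']
      push_cast
      linarith
    rw [abs_le]
    constructor <;> linarith
  have hH : ∀ p q : Fin n, |dist (Φ p) (Φ q) - dist p q| ≤ 2 * (ε / 2) := by
    intro p q
    have hd : dist p q = ρ p q := rfl
    rw [hd]
    rcases lt_trichotomy ((p : ℕ)) ((q : ℕ)) with h | h | h
    · exact le_trans (hdiff p q h) (by linarith)
    · rw [Fin.eq_of_val_eq h, hρself, dist_self]
      simp; linarith
    · rw [dist_comm, hρcomm]
      exact le_trans (hdiff q p h) (by linarith)
  letI instSum : MetricSpace (X ⊕ Fin n) :=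
    Metric.glueMetricApprox Φ (id : Fin n → Fin n) (ε / 2) (by linarith) hH
  have hinl : Isometry (Sum.inl : X → X ⊕ Fin n) :=
    Isometry.of_dist_eq fun x y => rfl
  have hinr : Isometry (Sum.inr : Fin n → X ⊕ Fin n) :=
    Isometry.of_dist_eq fun x y => rfl
  have hglue : ∀ p : Fin n, dist (Sum.inl (Φ p) : X ⊕ Fin n) (Sum.inr p) = ε / 2 :=
    fun p => Metric.glueDist_glued_points Φ (id : Fin n → Fin n) (ε / 2) p
  have hhaus : Metric.hausdorffDist (Set.range (Sum.inl : X → X ⊕ Fin n))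
      (Set.range (Sum.inr : Fin n → X ⊕ Fin n)) ≤ ε / 2 := by
    refine Metric.hausdorffDist_le_of_mem_dist (by linarith) ?_ ?_
    · rintro _ ⟨x, rfl⟩
      obtain ⟨p, rfl⟩ := hΦsurj x
      exact ⟨Sum.inr p, Set.mem_range_self _, le_of_eq (hglue p)⟩
    · rintro _ ⟨p, rfl⟩
      exact ⟨Sum.inl (Φ p), Set.mem_range_self _,
        le_of_eq (by rw [dist_comm]; exact hglue p)⟩
  have hgh : GromovHausdorff.ghDist X (Fin n) ≤ ε / 2 :=
    le_trans (GromovHausdorff.ghDist_le_hausdorffDist hinl hinr) hhaus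
  refine ⟨Fin n, instY, inferInstance, hNE, hkey, ?_, ?_, ?_⟩
  · rw [Fintype.card_fin, hcard]
  · rw [Fintype.card_fin]
    exact hncard
  · linarith
end

section
/- Let (X,d) be a nonempty compact ultrametric space and let ε > 0. Then there exists a finite nonempty ultrametric space (Y,ρ) with |Sp(Y)| = |Y| − 1 and Gromov–Hausdorff distance d_GH(X,Y) < ε. In other words, the isometry types of finite ultrametric spaces attaining equality in the Gomory–Hu inequality are dense in the Gromov–Hausdorff space of compact ultrametric spaces. -/
namespace Stmt15Aux

open Finset

variable {n : ℕ}

/-- The largest index in the strict ball of radius `r` around `i`, within `s`. -/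
noncomputable def Mr (d : Fin n → Fin n → ℝ) (s : Finset (Fin n)) (i : Fin n) (r : ℝ) : ℕ :=
  (s.filter (fun k => d i k < r)).sup (fun k => (k : ℕ))

noncomputable def psi (d : Fin n → Fin n → ℝ) (s : Finset (Fin n)) (i j : Fin n) : ℕ :=
  max (Mr d s i (d i j)) (Mr d s j (d j i))

noncomputable def rho (d : Fin n → Fin n → ℝ) (δ : ℝ) (s : Finset (Fin n)) (i j : Fin n) : ℝ :=
  if i = j then 0 else d i j + δ * (psi d s i j + 1)

/-- Hypotheses on the data. -/
structure Good (n : ℕ) (d : Fin n → Fin n → ℝ) (δ : ℝ) : Prop where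
  symm : ∀ i j, d i j = d j i
  zero_iff : ∀ i j, d i j = 0 ↔ i = j
  ultra : ∀ i j k, d i j ≤ max (d i k) (d k j)
  δpos : 0 < δ
  gap : ∀ i j k l, d i j < d k l → d i j + δ * (n + 1) ≤ d k l

variable {d : Fin n → Fin n → ℝ} {δ : ℝ}

namespace Good

theorem nonneg (G : Good n d δ) (i j : Fin n) : 0 ≤ d i j := by
  have h := G.ultra i i j
  rw [(G.zero_iff i i).2 rfl, G.symm j i] at h
  simpa using h

theorem pos (G : Good n d δ) {i j : Fin n} (h : i ≠ j) : 0 < d i j :=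
  lt_of_le_of_ne (G.nonneg i j) (fun h' => h ((G.zero_iff i j).1 h'.symm))

/-- Isoceles: if `d i k < d i j` then `d k j = d i j`. -/
theorem isoceles (G : Good n d δ) {i j k : Fin n} (h : d i k < d i j) :
    d k j = d i j := by
  have h1 : d k j ≤ d i j := by
    have := G.ultra k j i
    rw [G.symm k i] at this
    exact this.trans (max_le h.le le_rfl)
  have h2 : d i j ≤ d k j := by
    have := G.ultra i j k
    rcases max_cases (d i k) (d k j) with ⟨he, _⟩ | ⟨he, _⟩
    · rw [he] at this; exact absurd this (not_le.2 h)
    · rw [he] at this; exact this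
  exact le_antisymm h1 h2

/-- Strict balls: if `d i k < d i j` then the strict balls of radius `d i j` around `i`
and of radius `d k j` around `k` coincide. -/
theorem ball_congr (G : Good n d δ) {i j k : Fin n} (h : d i k < d i j) (m : Fin n) :
    d i m < d i j ↔ d k m < d k j := by
  rw [G.isoceles h]
  constructor
  · intro hm
    have := G.ultra k m i
    rw [G.symm k i] at this
    exact lt_of_le_of_lt this (max_lt h hm)
  · intro hm
    have := G.ultra i m k
    exact lt_of_le_of_lt this (max_lt h hm)

theorem Mr_congr (G : Good n d δ) {i j k : Fin n} (s : Finset (Fin n)) (h : d i k < d i j) :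
    Mr d s i (d i j) = Mr d s k (d k j) := by
  unfold Mr
  congr 1
  apply Finset.filter_congr
  intro m _
  simp only [G.ball_congr h m]

theorem Mr_lt (G : Good n d δ) (s : Finset (Fin n)) (i : Fin n) (r : ℝ) :
    Mr d s i r < n := by
  have hn : 0 < n := i.pos
  rw [Mr, Finset.sup_lt_iff hn]
  intro b _
  exact b.isLt

theorem psi_cast_le (G : Good n d δ) (s : Finset (Fin n)) (i j : Fin n) :
    (psi d s i j : ℝ) + 1 ≤ n := by
  have h1 : Mr d s i (d i j) < n := G.Mr_lt s i _
  have h2 : Mr d s j (d j i) < n := G.Mr_lt s j _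
  have : psi d s i j < n := max_lt h1 h2
  have := Nat.succ_le_of_lt this
  exact_mod_cast this

theorem psi_symm (s : Finset (Fin n)) (i j : Fin n) : psi d s i j = psi d s j i :=
  max_comm _ _

theorem rho_self (s : Finset (Fin n)) (i : Fin n) : rho d δ s i i = 0 := if_pos rfl

theorem rho_comm (G : Good n d δ) (s : Finset (Fin n)) (i j : Fin n) :
    rho d δ s i j = rho d δ s j i := by
  unfold rho
  rcases eq_or_ne i j with rfl | h
  · rfl
  · rw [if_neg h, if_neg (Ne.symm h), G.symm i j, psi_symm]

theorem rho_pos (G : Good n d δ) (s : Finset (Fin n)) {i j : Fin n} (h : i ≠ j) :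
    0 < rho d δ s i j := by
  rw [rho, if_neg h]
  have h1 := G.pos h
  have h2 : (0:ℝ) < δ * (psi d s i j + 1) := by
    apply mul_pos G.δpos
    positivity
  linarith

theorem rho_nonneg (G : Good n d δ) (s : Finset (Fin n)) (i j : Fin n) :
    0 ≤ rho d δ s i j := by
  rcases eq_or_ne i j with rfl | h
  · rw [rho_self]
  · exact (G.rho_pos s h).le

theorem le_rho (G : Good n d δ) (s : Finset (Fin n)) (i j : Fin n) :
    d i j ≤ rho d δ s i j := by
  rcases eq_or_ne i j with rfl | h
  · rw [rho_self, (G.zero_iff i i).2 rfl]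
  · rw [rho, if_neg h]
    nlinarith [G.δpos, (Nat.cast_nonneg (psi d s i j) : (0:ℝ) ≤ psi d s i j)]

theorem rho_le (G : Good n d δ) (s : Finset (Fin n)) (i j : Fin n) :
    rho d δ s i j ≤ d i j + δ * (n + 1) := by
  rcases eq_or_ne i j with rfl | h
  · rw [rho_self, (G.zero_iff i i).2 rfl]
    have := G.δpos
    have : (0:ℝ) ≤ δ * (n+1) := by positivity
    linarith
  · rw [rho, if_neg h]
    have h1 := G.psi_cast_le s i j
    nlinarith [G.δpos]

theorem rho_lt_of_dlt (G : Good n d δ) (s : Finset (Fin n)) {i j k l : Fin n}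
    (h : d i j < d k l) : rho d δ s i j < d k l := by
  calc rho d δ s i j ≤ d i j + δ * (psi d s i j + 1) := by
        rcases eq_or_ne i j with rfl | hne
        · rw [rho_self]; nlinarith [G.nonneg i i, G.δpos,
            (Nat.cast_nonneg (psi d s i i) : (0:ℝ) ≤ psi d s i i)]
        · rw [rho, if_neg hne]
    _ < d i j + δ * (n + 1) := by
        have h1 := G.psi_cast_le s i j
        have h2 : (psi d s i j : ℝ) + 1 < n + 1 := by linarith
        nlinarith [G.δpos]
    _ ≤ d k l := G.gap i j k l h

/-- The crucial injectivity of values. -/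
theorem rho_inj (G : Good n d δ) (s s' : Finset (Fin n)) {i j k l : Fin n}
    (hij : i ≠ j) (hkl : k ≠ l) (h : rho d δ s i j = rho d δ s' k l) :
    d i j = d k l ∧ psi d s i j = psi d s' k l := by
  have hd : d i j = d k l := by
    rcases lt_trichotomy (d i j) (d k l) with hlt | he | hlt
    · have := G.rho_lt_of_dlt s hlt
      have hle := G.le_rho s' k l
      rw [h] at this
      linarith
    · exact he
    · have := G.rho_lt_of_dlt s' hlt
      have hle := G.le_rho s i j
      rw [← h] at this
      linarith
  refine ⟨hd, ?_⟩
  rw [rho, if_neg hij, rho, if_neg hkl, hd] at h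
  have hδ := G.δpos
  have : (psi d s i j : ℝ) = (psi d s' k l : ℝ) := by
    have := mul_left_cancel₀ (ne_of_gt hδ) (by linarith : δ * ((psi d s i j : ℝ) + 1) = δ * ((psi d s' k l : ℝ) + 1))
    linarith
  exact_mod_cast this

theorem rho_mono (G : Good n d δ) (s : Finset (Fin n)) {i j k l : Fin n}
    (hij : i ≠ j) (hkl : k ≠ l) (hd : d i j = d k l) (hψ : psi d s i j ≤ psi d s k l) :
    rho d δ s i j ≤ rho d δ s k l := by
  rw [rho, if_neg hij, rho, if_neg hkl, hd]
  have : (psi d s i j : ℝ) ≤ (psi d s k l : ℝ) := by exact_mod_cast hψ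
  nlinarith [G.δpos]

/-- The perturbed distance is an ultrametric. -/
theorem rho_ultra (G : Good n d δ) (s : Finset (Fin n)) (i j k : Fin n) :
    rho d δ s i j ≤ max (rho d δ s i k) (rho d δ s k j) := by
  rcases eq_or_ne i j with rfl | hij
  · rw [rho_self]; exact le_max_of_le_left (G.rho_nonneg s i k)
  rcases eq_or_ne i k with rfl | hik
  · exact le_max_of_le_right le_rfl
  rcases eq_or_ne k j with rfl | hkj
  · exact le_max_of_le_left le_rfl
  have hU : d i j ≤ max (d i k) (d k j) := G.ultra i j k
  rcases lt_or_eq_of_le hU with hlt | heq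
  · -- strict: rho i j < max d ≤ max rho
    rcases max_cases (d i k) (d k j) with ⟨he, _⟩ | ⟨he, _⟩
    · rw [he] at hlt
      exact le_max_of_le_left ((G.rho_lt_of_dlt s hlt).le.trans (G.le_rho s i k))
    · rw [he] at hlt
      exact le_max_of_le_right ((G.rho_lt_of_dlt s hlt).le.trans (G.le_rho s k j))
  · -- equality case
    rcases lt_trichotomy (d i k) (d i j) with hb | hb | hb
    · -- b < a, hence c = a : show rho i j ≤ rho k j
      have hc : d k j = d i j := G.isoceles hb
      refine le_max_of_le_right (G.rho_mono s hij hkj hc.symm ?_)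
      apply le_of_eq
      unfold psi
      have h1 : Mr d s i (d i j) = Mr d s k (d k j) := G.Mr_congr s hb
      have h2 : Mr d s j (d j i) = Mr d s j (d j k) := by
        rw [G.symm j i, G.symm j k, hc]
      rw [h1, h2]
    · -- b = a
      rcases lt_trichotomy (d k j) (d i j) with hc | hc | hc
      · -- c < a = b : show rho i j ≤ rho i k
        have hc' : d k i = d k j → False := fun h => by
          rw [G.symm k i, hb] at h; exact absurd h (ne_of_gt hc)
        -- from c < a and b = a : use isoceles from k : d k j < d k i
        have hkj' : d k j < d k i := by rw [G.symm k i, hb]; exact hc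
        refine le_max_of_le_left (G.rho_mono s hij hik hb.symm ?_)
        apply le_of_eq
        unfold psi
        have h1 : Mr d s i (d i j) = Mr d s i (d i k) := by rw [hb]
        have h2 : Mr d s j (d j i) = Mr d s k (d k i) := by
          have hjk : d j k < d j i := by
            rw [G.symm j k, G.symm j i, ← hb, ← G.symm k i]
            exact hkj'
          exact G.Mr_congr s hjk
        rw [h1, h2]
      · -- b = a, c = a
        have h1 : Mr d s i (d i j) = Mr d s i (d i k) := by rw [hb]
        have h2 : Mr d s j (d j i) = Mr d s j (d j k) := by rw [G.symm j i, G.symm j k, hc]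
        have hle : psi d s i j ≤ max (psi d s i k) (psi d s k j) := by
          unfold psi
          rw [h1, h2]
          have a1 : Mr d s i (d i k) ≤ max (Mr d s i (d i k)) (Mr d s k (d k i)) := le_max_left _ _
          have a2 : Mr d s j (d j k) ≤ max (Mr d s k (d k j)) (Mr d s j (d j k)) := le_max_right _ _
          exact max_le (le_max_of_le_left a1) (le_max_of_le_right a2)
        rcases le_max_iff.1 hle with h | h
        · exact le_max_of_le_left (G.rho_mono s hij hik hb.symm h)
        · exact le_max_of_le_right (G.rho_mono s hij hkj hc.symm h)
      · -- c > a contradicts a = max b c with b = a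
        have hle : d k j ≤ d i j := by rw [heq]; exact le_max_right _ _
        exact absurd hc (not_lt.2 hle)
    · -- b > a contradicts
      have hle : d i k ≤ d i j := by rw [heq]; exact le_max_left _ _
      exact absurd hb (not_lt.2 hle)

theorem Mr_erase (G : Good n d δ) {s : Finset (Fin n)} {i₀ i : Fin n}
    (hmin : ∀ j ∈ s, i₀ ≤ j) (hi : i ∈ s) (hne : i ≠ i₀) {r : ℝ} (hr : 0 < r) :
    Mr d s i r = Mr d (s.erase i₀) i r := by
  have hfi : i ∈ (s.erase i₀).filter (fun k => d i k < r) := by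
    rw [Finset.mem_filter, Finset.mem_erase]
    exact ⟨⟨hne, hi⟩, by rw [(G.zero_iff i i).2 rfl]; exact hr⟩
  apply le_antisymm
  · apply Finset.sup_le
    intro k hk
    rw [Finset.mem_filter] at hk
    rcases eq_or_ne k i₀ with rfl | hki
    · refine le_trans ?_ (Finset.le_sup hfi)
      exact_mod_cast hmin i hi
    · exact Finset.le_sup (by rw [Finset.mem_filter, Finset.mem_erase]; exact ⟨⟨hki, hk.1⟩, hk.2⟩)
  · exact Finset.sup_mono (Finset.filter_subset_filter _ (Finset.erase_subset _ _))

theorem rho_erase (G : Good n d δ) {s : Finset (Fin n)} {i₀ i j : Fin n}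
    (hmin : ∀ j ∈ s, i₀ ≤ j) (hi : i ∈ s.erase i₀) (hj : j ∈ s.erase i₀) :
    rho d δ (s.erase i₀) i j = rho d δ s i j := by
  rcases eq_or_ne i j with rfl | hne
  · rw [rho_self, rho_self]
  · rw [Finset.mem_erase] at hi hj
    rw [rho, rho, if_neg hne, if_neg hne]
    have h1 : Mr d s i (d i j) = Mr d (s.erase i₀) i (d i j) :=
      G.Mr_erase hmin hi.2 hi.1 (G.pos hne)
    have h2 : Mr d s j (d j i) = Mr d (s.erase i₀) j (d j i) :=
      G.Mr_erase hmin hj.2 hj.1 (G.pos (Ne.symm hne))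
    rw [psi, psi, h1, h2]

end Good

noncomputable def spec (d : Fin n → Fin n → ℝ) (δ : ℝ) (s : Finset (Fin n)) : Finset ℝ :=
  ((s ×ˢ s).filter (fun p => p.1 ≠ p.2)).image (fun p => rho d δ s p.1 p.2)

theorem mem_spec {s : Finset (Fin n)} {v : ℝ} :
    v ∈ spec d δ s ↔ ∃ i j, i ∈ s ∧ j ∈ s ∧ i ≠ j ∧ rho d δ s i j = v := by
  simp only [spec, Finset.mem_image, Finset.mem_filter, Finset.mem_product, Prod.exists]
  constructor
  · rintro ⟨i, j, ⟨⟨hi, hj⟩, hne⟩, hv⟩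
    exact ⟨i, j, hi, hj, hne, hv⟩
  · rintro ⟨i, j, hi, hj, hne, hv⟩
    exact ⟨i, j, ⟨⟨hi, hj⟩, hne⟩, hv⟩

namespace Good

theorem Mr_self_lt (G : Good n d δ) {s : Finset (Fin n)} {i : Fin n} (hi : i ∈ s) {r : ℝ}
    (hr : 0 < r) : (i : ℕ) ≤ Mr d s i r :=
  Finset.le_sup (by rw [Finset.mem_filter]; exact ⟨hi, by rw [(G.zero_iff i i).2 rfl]; exact hr⟩)

/-- If two strict balls of the same radius have the same maximal index, the centers are
within that radius of each other. -/
theorem balls_meet (G : Good n d δ) {s : Finset (Fin n)} {i j : Fin n} {r : ℝ}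
    (hi : i ∈ s) (hj : j ∈ s) (hr : 0 < r) (hMr : Mr d s i r = Mr d s j r) :
    d i j < r := by
  have hmemi : i ∈ s.filter (fun k => d i k < r) := by
    rw [Finset.mem_filter]; exact ⟨hi, by rw [(G.zero_iff i i).2 rfl]; exact hr⟩
  have hmemj : j ∈ s.filter (fun k => d j k < r) := by
    rw [Finset.mem_filter]; exact ⟨hj, by rw [(G.zero_iff j j).2 rfl]; exact hr⟩
  obtain ⟨p, hp, hps⟩ := Finset.exists_mem_eq_sup _ ⟨i, hmemi⟩ (fun k : Fin n => (k : ℕ))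
  obtain ⟨q, hq, hqs⟩ := Finset.exists_mem_eq_sup _ ⟨j, hmemj⟩ (fun k : Fin n => (k : ℕ))
  have hpq : p = q := by
    have : (p : ℕ) = (q : ℕ) := by
      rw [← hps, ← hqs]; exact hMr
    exact Fin.val_injective this
  rw [Finset.mem_filter] at hp hq
  subst hpq
  calc d i j ≤ max (d i p) (d p j) := G.ultra i j p
    _ < r := max_lt hp.2 (by rw [G.symm p j]; exact hq.2)

/-- The spectrum of the perturbed metric on `s` has exactly `s.card - 1` values. -/
theorem spec_card (G : Good n d δ) : ∀ s : Finset (Fin n), s.Nonempty →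
    (spec d δ s).card = s.card - 1 := by
  intro s
  induction s using Finset.strongInduction with
  | _ s ih =>
  intro hs
  have hi₀ : s.min' hs ∈ s := s.min'_mem hs
  set i₀ := s.min' hs with hi₀def
  have hmin : ∀ j ∈ s, i₀ ≤ j := fun j hj => s.min'_le j hj
  by_cases hs' : (s.erase i₀).Nonempty
  case neg =>
    have hseq : s = {i₀} := by
      apply Finset.Subset.antisymm
      · intro x hx
        rw [Finset.mem_singleton]
        by_contra hne
        exact hs' ⟨x, Finset.mem_erase.2 ⟨hne, hx⟩⟩
      · exact Finset.singleton_subset_iff.2 hi₀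
    have hempty : spec d δ s = ∅ := by
      rw [Finset.eq_empty_iff_forall_notMem]
      intro v hv
      obtain ⟨i, j, hi, hj, hne, -⟩ := mem_spec.1 hv
      rw [hseq, Finset.mem_singleton] at hi hj
      exact hne (hi.trans hj.symm)
    rw [hempty, hseq]
    simp
  case pos =>
  have hst : s.erase i₀ ⊂ s := Finset.erase_ssubset hi₀
  have IH := ih _ hst hs'
  have hcard' : (s.erase i₀).card = s.card - 1 := Finset.card_erase_of_mem hi₀
  have hcard2 : 2 ≤ s.card := by
    have h1 := Finset.card_lt_card hst
    have h2 := Finset.card_pos.2 hs'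
    omega
  -- the minimal distance from i₀
  have hIne : ((s.erase i₀).image (fun j => d i₀ j)).Nonempty := hs'.image _
  set hstar := ((s.erase i₀).image (fun j => d i₀ j)).min' hIne with hstardef
  obtain ⟨j₁, hj₁mem, hj₁eq⟩ : ∃ j ∈ s.erase i₀, d i₀ j = hstar := by
    have h := Finset.min'_mem _ hIne
    rw [Finset.mem_image] at h
    obtain ⟨j, hj, hj2⟩ := h
    exact ⟨j, hj, hj2⟩
  have hstar_le : ∀ j ∈ s.erase i₀, hstar ≤ d i₀ j := fun j hj =>
    Finset.min'_le _ _ (Finset.mem_image_of_mem _ hj)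
  have hstar_pos : 0 < hstar := by
    rw [← hj₁eq]
    exact G.pos (Ne.symm (Finset.mem_erase.1 hj₁mem).1)
  -- the set of points at minimal distance from i₀ and the minimal ball index
  set K := (s.erase i₀).filter (fun j => d i₀ j = hstar) with hKdef
  have hKne : K.Nonempty := ⟨j₁, Finset.mem_filter.2 ⟨hj₁mem, hj₁eq⟩⟩
  have hKne2 : (K.image (fun j => Mr d s j hstar)).Nonempty := hKne.image _
  set mstar := (K.image (fun j => Mr d s j hstar)).min' hKne2 with hmdef
  obtain ⟨j₀, hj₀K, hj₀eq⟩ : ∃ j ∈ K, Mr d s j hstar = mstar := by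
    have h := Finset.min'_mem _ hKne2
    rw [Finset.mem_image] at h
    obtain ⟨j, hj, h2⟩ := h
    exact ⟨j, hj, h2⟩
  have mstar_le : ∀ j ∈ K, mstar ≤ Mr d s j hstar := fun j hj =>
    Finset.min'_le _ _ (Finset.mem_image_of_mem _ hj)
  have hKmem : ∀ j ∈ K, j ∈ s.erase i₀ ∧ d i₀ j = hstar := by
    intro j hj
    have h := Finset.mem_filter.1 hj
    exact ⟨h.1, h.2⟩
  have hj₀mem : j₀ ∈ s.erase i₀ := (hKmem j₀ hj₀K).1
  have hj₀s : j₀ ∈ s := (Finset.mem_erase.1 hj₀mem).2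
  have hj₀ne : j₀ ≠ i₀ := (Finset.mem_erase.1 hj₀mem).1
  have hd0 : d i₀ j₀ = hstar := (hKmem j₀ hj₀K).2
  -- for j ∈ K, the ball index exceeds i₀
  have hK_lt : ∀ j ∈ K, (i₀ : ℕ) < Mr d s j hstar := by
    intro j hj
    have hjmem := (hKmem j hj).1
    have hjs : j ∈ s := (Finset.mem_erase.1 hjmem).2
    have hjne : j ≠ i₀ := (Finset.mem_erase.1 hjmem).1
    have h1 : (j : ℕ) ≤ Mr d s j hstar := G.Mr_self_lt hjs hstar_pos
    have h2 : (i₀ : ℕ) < (j : ℕ) := by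
      have h3 : (i₀ : ℕ) ≤ (j : ℕ) := hmin j hjs
      exact lt_of_le_of_ne h3 (fun h => hjne (Fin.val_injective h).symm)
    omega
  -- the strict ball of radius hstar around i₀ is {i₀}
  have hMi₀ : Mr d s i₀ hstar = (i₀ : ℕ) := by
    apply le_antisymm
    · apply Finset.sup_le
      intro k hk
      rw [Finset.mem_filter] at hk
      rcases eq_or_ne k i₀ with rfl | hki
      · exact le_rfl
      · exact absurd hk.2 (not_lt.2 (hstar_le k (Finset.mem_erase.2 ⟨hki, hk.1⟩)))
    · exact G.Mr_self_lt hi₀ hstar_pos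
  set vstar := hstar + δ * (mstar + 1) with hvdef
  -- the value of rho between i₀ and any point of K
  have hrho_i₀K : ∀ j ∈ K, rho d δ s i₀ j = hstar + δ * (Mr d s j hstar + 1) := by
    intro j hj
    have hjmem := (hKmem j hj).1
    have hjne : i₀ ≠ j := Ne.symm (Finset.mem_erase.1 hjmem).1
    have hdj : d i₀ j = hstar := (hKmem j hj).2
    have hpsi : psi d s i₀ j = Mr d s j hstar := by
      rw [psi, hdj, G.symm j i₀, hdj, hMi₀]
      exact max_eq_right (le_of_lt (hK_lt j hj))
    rw [rho, if_neg hjne, hdj, hpsi]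
  have hC1 : rho d δ s i₀ j₀ = vstar := by
    rw [hrho_i₀K j₀ hj₀K, hj₀eq]
  -- claim C2 : distances from i₀ land in insert vstar (spec s')
  have hC2 : ∀ j ∈ s.erase i₀, rho d δ s i₀ j ∈ insert vstar (spec d δ (s.erase i₀)) := by
    intro j hj
    have hjs : j ∈ s := (Finset.mem_erase.1 hj).2
    have hjne : j ≠ i₀ := (Finset.mem_erase.1 hj).1
    rcases eq_or_lt_of_le (hstar_le j hj) with heq | hlt
    · -- j ∈ K
      have hdj : d i₀ j = hstar := heq.symm
      have hjK : j ∈ K := Finset.mem_filter.2 ⟨hj, hdj⟩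
      rcases eq_or_lt_of_le (mstar_le j hjK) with hMeq | hMlt
      · rw [hrho_i₀K j hjK, ← hMeq]
        exact Finset.mem_insert_self _ _
      · -- d j₀ j = hstar
        have hle : d j₀ j ≤ hstar := by
          have h := G.ultra j₀ j i₀
          rw [G.symm j₀ i₀, hd0, hdj, max_self] at h
          exact h
        have hdjj : d j₀ j = hstar := by
          rcases lt_or_eq_of_le hle with hlt2 | heq2
          · exfalso
            have hjj₀ : d j j₀ < d j i₀ := by
              rw [G.symm j j₀, G.symm j i₀, hdj]
              exact hlt2
            have hcongr := G.Mr_congr s hjj₀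
            rw [G.symm j i₀, hdj, G.symm j₀ i₀, hd0, hj₀eq] at hcongr
            omega
          · exact heq2
        have hj₀j : j₀ ≠ j := by
          intro h
          rw [h, (G.zero_iff j j).2 rfl] at hdjj
          exact absurd hdjj.symm (ne_of_gt hstar_pos)
        have hpsi : psi d s j₀ j = Mr d s j hstar := by
          rw [psi, hdjj, G.symm j j₀, hdjj, hj₀eq]
          exact max_eq_right (le_of_lt hMlt)
        have hrj : rho d δ s j₀ j = hstar + δ * (Mr d s j hstar + 1) := by
          rw [rho, if_neg hj₀j, hdjj, hpsi]
        rw [hrho_i₀K j hjK, ← hrj, ← G.rho_erase hmin hj₀mem hj]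
        exact Finset.mem_insert_of_mem (mem_spec.2 ⟨j₀, j, hj₀mem, hj, hj₀j, rfl⟩)
    · -- hstar < d i₀ j
      have hlt0 : d i₀ j₀ < d i₀ j := by rw [hd0]; exact hlt
      have hdjj : d j₀ j = d i₀ j := G.isoceles hlt0
      have hpos2 : 0 < d j₀ j := by rw [hdjj]; linarith
      have hj₀j : j₀ ≠ j := by
        intro h
        rw [h, (G.zero_iff j j).2 rfl] at hpos2
        exact lt_irrefl 0 hpos2
      have h1 := G.Mr_congr s hlt0
      have hpsieq : psi d s i₀ j = psi d s j₀ j := by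
        rw [psi, psi, h1, G.symm j i₀, G.symm j j₀, hdjj]
      have hrr : rho d δ s i₀ j = rho d δ s j₀ j := by
        rw [rho, rho, if_neg (Ne.symm hjne), if_neg hj₀j, hdjj, hpsieq]
      rw [hrr, ← G.rho_erase hmin hj₀mem hj]
      exact Finset.mem_insert_of_mem (mem_spec.2 ⟨j₀, j, hj₀mem, hj, hj₀j, rfl⟩)
  -- psi at the special pair
  have hpsi0 : psi d s i₀ j₀ = mstar := by
    rw [psi, hd0, G.symm j₀ i₀, hd0, hMi₀, hj₀eq]
    exact max_eq_right (le_of_lt (hj₀eq ▸ hK_lt j₀ hj₀K))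
  -- claim C3 : vstar is a new value
  have hC3 : vstar ∉ spec d δ (s.erase i₀) := by
    intro hv
    obtain ⟨i, j, hi, hj, hne, hv⟩ := mem_spec.1 hv
    rw [G.rho_erase hmin hi hj] at hv
    obtain ⟨hd, hpsi⟩ := G.rho_inj s s hne (Ne.symm hj₀ne) (hv.trans hC1.symm)
    have hdij : d i j = hstar := hd.trans hd0
    have hpsim : psi d s i j = mstar := hpsi.trans hpsi0
    -- a sub-lemma applied in both orientations
    have key : ∀ a b : Fin n, a ∈ s.erase i₀ → b ∈ s.erase i₀ → d a b = hstar →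
        Mr d s a (d a b) = mstar → Mr d s b (d b a) ≤ mstar → False := by
      intro a b ha hb hab hMa hMb
      have has : a ∈ s := (Finset.mem_erase.1 ha).2
      have hbs : b ∈ s := (Finset.mem_erase.1 hb).2
      have hMa' : Mr d s a hstar = Mr d s j₀ hstar := by
        rw [hj₀eq, ← hMa, hab]
      have haj₀ : d a j₀ < hstar := G.balls_meet has hj₀s hstar_pos hMa'
      have haeq : d i₀ a = hstar := by
        apply le_antisymm
        · have h := G.ultra i₀ a j₀
          rw [hd0, G.symm j₀ a] at h
          exact h.trans (max_le le_rfl haj₀.le)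
        · exact hstar_le a ha
      have haK : a ∈ K := Finset.mem_filter.2 ⟨ha, haeq⟩
      have hbeq : d i₀ b = hstar := by
        apply le_antisymm
        · have h := G.ultra i₀ b a
          rw [haeq, hab] at h
          simpa using h
        · exact hstar_le b hb
      have hbK : b ∈ K := Finset.mem_filter.2 ⟨hb, hbeq⟩
      have hMb' : Mr d s b hstar = mstar := by
        apply le_antisymm
        · have hba : d b a = hstar := by rw [G.symm b a]; exact hab
          rw [← hba]
          exact hMb
        · exact mstar_le b hbK
      have hMab : Mr d s a hstar = Mr d s b hstar := by
        rw [hMb', ← hMa, hab]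
      have := G.balls_meet has hbs hstar_pos hMab
      rw [hab] at this
      exact lt_irrefl _ this
    have hpsim' : max (Mr d s i (d i j)) (Mr d s j (d j i)) = mstar := hpsim
    rcases max_cases (Mr d s i (d i j)) (Mr d s j (d j i)) with ⟨h1, h2⟩ | ⟨h1, h2⟩
    · have hMa : Mr d s i (d i j) = mstar := by rw [← hpsim', h1]
      have hMb : Mr d s j (d j i) ≤ mstar := by rw [← hMa]; exact h2
      exact key i j hi hj hdij hMa hMb
    · have hMa : Mr d s j (d j i) = mstar := by rw [← hpsim', h1]
      have hMb : Mr d s i (d i j) ≤ mstar := by rw [← hMa]; exact h2.le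
      have hdji : d j i = hstar := by rw [G.symm j i]; exact hdij
      exact key j i hj hi hdji hMa hMb
  -- claim C4 : the spectrum of s is obtained by inserting vstar
  have hC4 : spec d δ s = insert vstar (spec d δ (s.erase i₀)) := by
    apply Finset.Subset.antisymm
    · intro v hv
      obtain ⟨i, j, hi, hj, hne, hv⟩ := mem_spec.1 hv
      rcases eq_or_ne i i₀ with rfl | hii₀
      · rw [← hv]
        exact hC2 j (Finset.mem_erase.2 ⟨Ne.symm hne, hj⟩)
      rcases eq_or_ne j i₀ with rfl | hji₀
      · rw [← hv, G.rho_comm]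
        exact hC2 i (Finset.mem_erase.2 ⟨hii₀, hi⟩)
      · have hi' : i ∈ s.erase i₀ := Finset.mem_erase.2 ⟨hii₀, hi⟩
        have hj' : j ∈ s.erase i₀ := Finset.mem_erase.2 ⟨hji₀, hj⟩
        rw [← hv, ← G.rho_erase hmin hi' hj']
        exact Finset.mem_insert_of_mem (mem_spec.2 ⟨i, j, hi', hj', hne, rfl⟩)
    · intro v hv
      rcases Finset.mem_insert.1 hv with rfl | hv
      · exact mem_spec.2 ⟨i₀, j₀, hi₀, hj₀s, Ne.symm hj₀ne, hC1⟩
      · obtain ⟨i, j, hi, hj, hne, hv⟩ := mem_spec.1 hv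
        rw [G.rho_erase hmin hi hj] at hv
        exact mem_spec.2 ⟨i, j, (Finset.mem_erase.1 hi).2, (Finset.mem_erase.1 hj).2, hne, hv⟩
  rw [hC4, Finset.card_insert_of_notMem hC3, IH, hcard']
  omega


/-- The metric space structure induced by `rho` on `Fin n`. -/
noncomputable def rhoMetric (G : Good n d δ) : MetricSpace (Fin n) where
  dist i j := rho d δ Finset.univ i j
  dist_self i := rho_self _ i
  dist_comm i j := G.rho_comm _ i j
  dist_triangle i k j :=
    le_trans (G.rho_ultra Finset.univ i j k)
      (max_le (le_add_of_nonneg_right (G.rho_nonneg _ _ _))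
        (le_add_of_nonneg_left (G.rho_nonneg _ _ _)))
  eq_of_dist_eq_zero {i j} h := by
    by_contra hne
    exact absurd h (ne_of_gt (G.rho_pos _ hne))

theorem rhoMetric_dist (G : Good n d δ) (i j : Fin n) :
    @dist (Fin n) (rhoMetric G).toDist i j = rho d δ Finset.univ i j := rfl

end Good

end Stmt15Aux

open Stmt15Aux in
theorem stmt15' {X : Type u} [MetricSpace X] [CompactSpace X] [Nonempty X]
    (hultra : ∀ x y z : X, dist x y ≤ max (dist x z) (dist z y))
    (ε : ℝ) (hε : 0 < ε) :
    ∃ (Y : Type) (_ : MetricSpace Y) (_ : Fintype Y) (_ : Nonempty Y),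
      (∀ x y z : Y, dist x y ≤ max (dist x z) (dist z y)) ∧
      ({r : ℝ | ∃ x y : Y, x ≠ y ∧ dist x y = r}).ncard = Fintype.card Y - 1 ∧
      GromovHausdorff.ghDist X Y < ε := by
  classical
  have h4 : (0:ℝ) < ε/4 := by linarith
  obtain ⟨t, htfin, htcover⟩ :=
    (Metric.totallyBounded_iff.1 (isCompact_univ : IsCompact (Set.univ : Set X)).totallyBounded) (ε/4) h4
  have hnet : ∀ x : X, ∃ y ∈ t, dist x y < ε/4 := by
    intro x
    have hx := htcover (Set.mem_univ x)
    simp only [Set.mem_iUnion, Metric.mem_ball] at hx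
    obtain ⟨y, hy, hxy⟩ := hx
    exact ⟨y, hy, hxy⟩
  have htne : t.Nonempty := by
    obtain ⟨x⟩ := ‹Nonempty X›
    obtain ⟨y, hy, -⟩ := hnet x
    exact ⟨y, hy⟩
  haveI : Fintype ↥t := htfin.fintype
  haveI : Nonempty ↥t := htne.to_subtype
  set n := Fintype.card ↥t with hndef
  have hnpos : 0 < n := Fintype.card_pos
  set e : ↥t ≃ Fin n := Fintype.equivFin ↥t with hedef
  set f : Fin n → X := fun i => ((e.symm i : ↥t) : X) with hfdef
  have hfinj : Function.Injective f :=
    fun i j h => e.symm.injective (Subtype.coe_injective h)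
  set d : Fin n → Fin n → ℝ := fun i j => dist (f i) (f j) with hddef
  -- the minimal positive gap between distance values
  set V : Finset ℝ := Finset.image (fun p : Fin n × Fin n => d p.1 p.2) Finset.univ with hVdef
  set D : Finset ℝ := ((V ×ˢ V).filter (fun p => p.1 < p.2)).image (fun p => p.2 - p.1)
    with hDdef
  set g : ℝ := if h : D.Nonempty then D.min' h else 1 with hgdef
  have hDpos : ∀ x ∈ D, (0:ℝ) < x := by
    intro x hx
    rw [hDdef, Finset.mem_image] at hx
    obtain ⟨p, hp, hpe⟩ := hx
    rw [Finset.mem_filter] at hp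
    exact hpe ▸ sub_pos.2 hp.2
  have hgpos : 0 < g := by
    rw [hgdef]
    split
    · rename_i h
      exact hDpos _ (D.min'_mem h)
    · exact one_pos
  set δ : ℝ := min g (ε/4) / (n+1) with hδdef
  have hδpos : 0 < δ := by
    apply div_pos (lt_min hgpos h4)
    positivity
  have hδn : δ * (n+1) = min g (ε/4) := by
    rw [hδdef]
    field_simp
  have G : Good n d δ := by
    refine ⟨fun i j => dist_comm _ _, ?_, fun i j k => hultra _ _ _, hδpos, ?_⟩
    · intro i j
      rw [hddef]
      simp only [dist_eq_zero]
      exact ⟨fun h => hfinj h, fun h => by rw [h]⟩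
    · intro i j k l hlt
      have hmem : d k l - d i j ∈ D := by
        rw [hDdef, Finset.mem_image]
        refine ⟨(d i j, d k l), ?_, rfl⟩
        rw [Finset.mem_filter, Finset.mem_product]
        refine ⟨⟨?_, ?_⟩, hlt⟩
        · rw [hVdef, Finset.mem_image]; exact ⟨(i, j), Finset.mem_univ _, rfl⟩
        · rw [hVdef, Finset.mem_image]; exact ⟨(k, l), Finset.mem_univ _, rfl⟩
      have hDne : D.Nonempty := ⟨_, hmem⟩
      have hgle : g ≤ d k l - d i j := by
        rw [hgdef, dif_pos hDne]
        exact D.min'_le _ hmem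
      have : δ * (n+1) ≤ g := by rw [hδn]; exact min_le_left _ _
      linarith
  letI M : MetricSpace (Fin n) := G.rhoMetric
  haveI : CompactSpace (Fin n) := Finite.compactSpace
  haveI hFne : Nonempty (Fin n) := ⟨⟨0, hnpos⟩⟩
  refine ⟨Fin n, M, Fin.fintype n, hFne, ?_, ?_, ?_⟩
  · intro x y z
    show rho d δ Finset.univ x y ≤ max (rho d δ Finset.univ x z) (rho d δ Finset.univ z y)
    exact G.rho_ultra Finset.univ x y z
  · have hset : {r : ℝ | ∃ x y : Fin n, x ≠ y ∧ dist x y = r}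
        = ↑(spec d δ Finset.univ) := by
      ext r
      simp only [Set.mem_setOf_eq, Finset.coe_image, Finset.mem_coe]
      rw [mem_spec]
      constructor
      · rintro ⟨x, y, hne, hr⟩
        exact ⟨x, y, Finset.mem_univ _, Finset.mem_univ _, hne, hr⟩
      · rintro ⟨x, y, -, -, hne, hr⟩
        exact ⟨x, y, hne, hr⟩
    rw [hset, Set.ncard_coe_finset, G.spec_card Finset.univ Finset.univ_nonempty,
      Finset.card_univ, Fintype.card_fin]
  · set Φ : ↥t → Fin n := fun x => e x with hΦdef
    have hs : ∀ x : X, ∃ y ∈ t, dist x y ≤ ε/4 := by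
      intro x
      obtain ⟨y, hy, hxy⟩ := hnet x
      exact ⟨y, hy, hxy.le⟩
    have hs' : ∀ x : Fin n, ∃ y : ↥t, dist x (Φ y) ≤ 0 := by
      intro x
      refine ⟨e.symm x, ?_⟩
      have : Φ (e.symm x) = x := e.apply_symm_apply x
      rw [this, dist_self]
    have hH : ∀ x y : ↥t, |dist (x : ↥t) y - dist (Φ x) (Φ y)| ≤ δ * (n+1) := by
      intro x y
      have hdd : dist (x : ↥t) y = d (Φ x) (Φ y) := by
        rw [Subtype.dist_eq, hddef]
        congr 1 <;> simp [hfdef, hΦdef]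
      rw [hdd]
      rcases eq_or_ne (Φ x) (Φ y) with hxy | hxy
      · rw [hxy]
        rw [G.rhoMetric_dist]
        rw [Good.rho_self, (G.zero_iff (Φ y) (Φ y)).2 rfl]
        simp
        positivity
      · rw [G.rhoMetric_dist]
        have h1 := G.le_rho Finset.univ (Φ x) (Φ y)
        have h2 := G.rho_le Finset.univ (Φ x) (Φ y)
        rw [abs_le]
        constructor <;> [linarith; linarith]
    have hgh := GromovHausdorff.ghDist_le_of_approx_subsets Φ hs hs' hH
    have hδε : δ * (n+1) ≤ ε/4 := by rw [hδn]; exact min_le_right _ _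
    calc GromovHausdorff.ghDist X (Fin n) ≤ ε/4 + δ * (n+1) / 2 + 0 := hgh
      _ < ε := by linarith


/-- For every nonempty compact ultrametric space `(X,d)` and every
`ε > 0` there is a finite nonempty ultrametric space `(Y,ρ)` with
`|Sp(Y)| = |Y| − 1` and Gromov–Hausdorff distance `d_GH(X,Y) < ε`: the isometry
types of finite ultrametric spaces attaining equality in the Gomory–Hu inequality
are dense in the Gromov–Hausdorff space of compact ultrametric spaces. -/
theorem stmt15 {X : Type u} [MetricSpace X] [CompactSpace X] [Nonempty X]
    (hultra : ∀ x y z : X, dist x y ≤ max (dist x z) (dist z y))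
    (ε : ℝ) (hε : 0 < ε) :
    ∃ (Y : Type) (_ : MetricSpace Y) (_ : Fintype Y) (_ : Nonempty Y),
      (∀ x y z : Y, dist x y ≤ max (dist x z) (dist z y)) ∧
      ({r : ℝ | ∃ x y : Y, x ≠ y ∧ dist x y = r}).ncard = Fintype.card Y - 1 ∧
      GromovHausdorff.ghDist X Y < ε := by
  exact stmt15' hultra ε hε
end
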